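/- arXiv:2502.05611 — 2 statements merged into one kernel-verified Lean document; each statement's English description precedes it below -/
import Mathlib

section
/- Let r ≥ 2 be an integer and a < b reals. Let h : (a,b) → ℝ be r times differentiable with h^{(r)}(x) ≥ λ₀ for all x ∈ (a,b), where λ₀ > 0. Let w : [a,b] → ℝ be a function of bounded variation, and set V₀ equal to the total variation of w on [a,b] plus the maximum of |w| on [a,b]. Then there is a constant C(r), depending only on r, such that |∫_a^b w(x) e^{i h(x)} dx| ≤ C(r) · V₀ / λ₀^{1/r}. -/
open MeasureTheory
open Set


lemma L2 {a b : ℝ} (hab : a ≤ b) {g : ℝ → ℝ} (hg : Monotone g)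
    {φ : ℝ → ℂ} (hφ : IntegrableOn φ (Set.Ioo a b))
    {M : ℝ} (hM : ∀ x y, a ≤ x → y ≤ b → ‖∫ t in Set.Ioo x y, φ t‖ ≤ M) :
    ‖∫ t in Set.Ioo a b, g t • φ t‖ ≤ (|g a| + (g b - g a)) * M := by
  have hM0 : 0 ≤ M := le_trans (by simp) (hM a a le_rfl hab)
  set T : ℝ := g b - g a with hT
  have hT0 : 0 ≤ T := sub_nonneg.2 (hg hab)
  set ψ : ℝ → ℝ := fun t => g t - g a with hψ
  have hψmeas : Measurable ψ := (hg.measurable).sub measurable_const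
  have hψ0 : ∀ t ∈ Set.Icc a b, 0 ≤ ψ t ∧ ψ t ≤ T := by
    intro t ht
    exact ⟨sub_nonneg.2 (hg ht.1), sub_le_sub_right (hg ht.2) _⟩
  -- measures
  set μ := volume.restrict (Set.Ioo a b) with hμ
  set ν := volume.restrict (Set.Ioo 0 T) with hν
  -- the product function
  set S : Set (ℝ × ℝ) := {z : ℝ × ℝ | z.2 < ψ z.1} with hS
  have hSmeas : MeasurableSet S := measurableSet_lt measurable_snd (hψmeas.comp measurable_fst)
  set F : ℝ × ℝ → ℂ := S.indicator (fun z => φ z.1) with hF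
  have hG : Integrable (fun z : ℝ × ℝ => φ z.1 * (1:ℂ)) (μ.prod ν) :=
    Integrable.mul_prod hφ (integrable_const 1)
  simp only [mul_one] at hG
  have hFint : Integrable F (μ.prod ν) := by
    refine Integrable.mono hG (hG.aestronglyMeasurable.indicator hSmeas) ?_
    filter_upwards with z
    by_cases hz : z ∈ S
    · simp [hF, hz]
    · simp [hF, hz]
  -- inner integral over s equals ψ t • φ t
  have hinner : ∀ t ∈ Set.Ioo a b, ∫ s, F (t, s) ∂ν = ψ t • φ t := by
    intro t ht
    have h1 : ∀ s, F (t, s) = (Set.Iio (ψ t)).indicator (fun _ => φ t) s := by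
      intro s
      by_cases hs : s < ψ t
      · simp [hF, hS, Set.indicator_of_mem, hs, Set.mem_Iio]
      · simp [hF, hS, Set.indicator_of_notMem, hs, Set.mem_Iio]
    simp only [h1, hν]
    rw [setIntegral_indicator measurableSet_Iio, setIntegral_const]
    have : Set.Ioo 0 T ∩ Set.Iio (ψ t) = Set.Ioo 0 (ψ t) := by
      ext s
      have := (hψ0 t ⟨ht.1.le, ht.2.le⟩).2
      simp only [Set.mem_inter_iff, Set.mem_Ioo, Set.mem_Iio]
      constructor
      · rintro ⟨⟨h1, h2⟩, h3⟩; exact ⟨h1, h3⟩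
      · rintro ⟨h1, h3⟩; exact ⟨⟨h1, lt_of_lt_of_le h3 this⟩, h3⟩
    rw [this, Real.volume_real_Ioo_of_le (hψ0 t ⟨ht.1.le, ht.2.le⟩).1]
    simp
  -- integrability of ψ • φ
  have hψφ_int : Integrable (fun t => ψ t • φ t) μ := by
    refine Integrable.mono (hφ.smul T) ((hψmeas.aemeasurable.aestronglyMeasurable).smul hφ.aestronglyMeasurable) ?_
    rw [hμ]
    filter_upwards [ae_restrict_mem measurableSet_Ioo] with t ht
    simp only [Pi.smul_apply]
    rw [norm_smul, norm_smul]
    refine mul_le_mul_of_nonneg_right ?_ (norm_nonneg _)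
    rw [Real.norm_eq_abs, Real.norm_eq_abs, abs_of_nonneg (hψ0 t ⟨ht.1.le, ht.2.le⟩).1,
      abs_of_nonneg hT0]
    exact (hψ0 t ⟨ht.1.le, ht.2.le⟩).2
  -- the swap
  have key : ∫ t in Set.Ioo a b, ψ t • φ t = ∫ s, (∫ t, F (t, s) ∂μ) ∂ν := by
    have h1 : ∫ t in Set.Ioo a b, ψ t • φ t = ∫ t, (∫ s, F (t, s) ∂ν) ∂μ := by
      rw [hμ]
      refine setIntegral_congr_fun measurableSet_Ioo ?_
      intro t ht
      exact (hinner t ht).symm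
    rw [h1]
    exact integral_integral_swap hFint
  -- bound for the outer integrand
  have houter : ∀ s : ℝ, ‖∫ t, F (t, s) ∂μ‖ ≤ M := by
    intro s
    have hEs : MeasurableSet {t : ℝ | s < ψ t} := measurableSet_lt measurable_const hψmeas
    have h2 : ∫ t, F (t, s) ∂μ = ∫ t in Set.Ioo a b ∩ {t : ℝ | s < ψ t}, φ t := by
      have h3 : (fun t => F (t, s)) = fun t => ({t : ℝ | s < ψ t}).indicator φ t := by
        funext t
        by_cases ht : s < ψ t
        · simp [hF, hS, Set.indicator_of_mem, ht]
        · simp [hF, hS, Set.indicator_of_notMem, ht]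
      rw [h3, hμ, setIntegral_indicator hEs]
    set U := Set.Ioo a b ∩ {t : ℝ | s < ψ t} with hU
    rcases eq_empty_or_nonempty U with hUe | hUne
    · rw [h2, hUe]
      simpa using hM0
    · set c := sInf U with hc
      have hUbdd : BddBelow U := ⟨a, fun u hu => hu.1.1.le⟩
      have hca : a ≤ c := le_csInf hUne fun u hu => hu.1.1.le
      have hUsub : U ⊆ Set.Ico c b := fun u hu => ⟨csInf_le hUbdd hu, hu.1.2⟩
      have hsub2 : Set.Ioo c b ⊆ U := by
        intro t ht
        obtain ⟨u, huU, hut⟩ := (csInf_lt_iff hUbdd hUne).1 ht.1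
        exact ⟨⟨lt_of_lt_of_le huU.1.1 hut.le, ht.2⟩,
          lt_of_lt_of_le huU.2 (sub_le_sub_right (hg hut.le) _)⟩
      have hae : U =ᵐ[volume] Set.Ioo c b := by
        rw [Filter.eventuallyEq_set]
        have hne : ∀ᵐ t : ℝ, t ≠ c := by
          have hset : ({t : ℝ | ¬ t ≠ c}) = {c} := by ext u; simp
          rw [ae_iff, hset]
          exact measure_singleton c
        filter_upwards [hne] with t htc
        constructor
        · intro htU
          rcases hUsub htU with ⟨h1, h2⟩
          exact ⟨lt_of_le_of_ne h1 (Ne.symm htc), h2⟩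
        · intro ht; exact hsub2 ht
      rw [h2, setIntegral_congr_set hae]
      exact hM c b hca le_rfl
  -- assemble
  have hsplit : ∫ t in Set.Ioo a b, g t • φ t
      = (g a) • (∫ t in Set.Ioo a b, φ t) + ∫ t in Set.Ioo a b, ψ t • φ t := by
    have h4 : ∫ t in Set.Ioo a b, g t • φ t
        = ∫ t in Set.Ioo a b, ((g a) • φ t + ψ t • φ t) := by
      refine setIntegral_congr_fun measurableSet_Ioo fun t _ => ?_
      have he : g t = g a + (g t - g a) := by ring
      calc g t • φ t = (g a + (g t - g a)) • φ t := by rw [← he]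
        _ = g a • φ t + (g t - g a) • φ t := add_smul _ _ _
    have hconst : Integrable (fun t => g a • φ t) μ := hφ.smul (g a)
    rw [h4, integral_add hconst hψφ_int, integral_smul]
  rw [hsplit]
  refine (norm_add_le _ _).trans ?_
  have hb1 : ‖(g a) • (∫ t in Set.Ioo a b, φ t)‖ ≤ |g a| * M := by
    rw [norm_smul, Real.norm_eq_abs]
    exact mul_le_mul_of_nonneg_left (hM a b le_rfl le_rfl) (abs_nonneg _)
  have hb2 : ‖∫ t in Set.Ioo a b, ψ t • φ t‖ ≤ T * M := by
    rw [key]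
    have : ‖∫ s in Set.Ioo 0 T, (∫ t, F (t, s) ∂μ)‖ ≤ M * (volume (Set.Ioo 0 T)).toReal := by
      refine norm_setIntegral_le_of_norm_le_const ?_ ?_
      · rw [Real.volume_Ioo]; exact ENNReal.ofReal_lt_top
      · intro s _; exact houter s
    rw [hν]
    refine this.trans ?_
    rw [Real.volume_Ioo, ENNReal.toReal_ofReal (by simpa using hT0)]
    simp [mul_comm]
  calc ‖(g a) • (∫ t in Set.Ioo a b, φ t)‖ + ‖∫ t in Set.Ioo a b, ψ t • φ t‖
      ≤ |g a| * M + T * M := add_le_add hb1 hb2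
    _ = (|g a| + (g b - g a)) * M := by rw [hT]; ring

lemma int_exp {a b : ℝ} {h : ℝ → ℝ} (hc : ContinuousOn h (Set.Ioo a b)) :
    IntegrableOn (fun t => Complex.exp (Complex.I * (h t : ℂ))) (Set.Ioo a b) := by
  have hcont : ContinuousOn (fun t => Complex.exp (Complex.I * (h t : ℂ))) (Set.Ioo a b) :=
    Complex.continuous_exp.comp_continuousOn
      (continuousOn_const.mul (Complex.continuous_ofReal.comp_continuousOn hc))
  refine Integrable.mono' (g := fun _ => (1:ℝ)) ?_ (hcont.aestronglyMeasurable measurableSet_Ioo) ?_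
  · exact integrableOn_const (C := (1:ℝ)) measure_Ioo_lt_top.ne
  · filter_upwards with t
    rw [Complex.norm_exp]
    simp

lemma norm_one_exp (x : ℝ) : ‖Complex.exp (Complex.I * (x : ℂ))‖ = 1 := by
  rw [Complex.norm_exp]
  simp

lemma norm_neg_phase (s : Set ℝ) (h : ℝ → ℝ) :
    ‖∫ t in s, Complex.exp (Complex.I * ((-(h t) : ℝ) : ℂ))‖
      = ‖∫ t in s, Complex.exp (Complex.I * ((h t : ℝ) : ℂ))‖ := by
  have hconj : ∀ t : ℝ, Complex.exp (Complex.I * ((-(h t) : ℝ) : ℂ))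
      = (starRingEnd ℂ) (Complex.exp (Complex.I * ((h t : ℝ) : ℂ))) := by
    intro t
    rw [← Complex.exp_conj]
    congr 1
    rw [map_mul, Complex.conj_I, Complex.conj_ofReal]
    push_cast
    ring
  simp only [hconj]
  rw [integral_conj]
  exact RCLike.norm_conj _

lemma split3 {φ : ℝ → ℂ} {x m1 m2 y : ℝ} (h1 : x ≤ m1) (h2 : m1 ≤ m2) (h3 : m2 ≤ y)
    (hφ : IntegrableOn φ (Set.Ioo x y)) :
    ∫ t in Set.Ioo x y, φ t
      = (∫ t in Set.Ioo x m1, φ t) + (∫ t in Set.Ioo m1 m2, φ t) + ∫ t in Set.Ioo m2 y, φ t := by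
  have key : ∀ u v : ℝ, x ≤ u → v ≤ y → u ≤ v → IntervalIntegrable φ volume u v := by
    intro u v hu hv huv
    rw [intervalIntegrable_iff_integrableOn_Ioo_of_le huv]
    exact hφ.mono_set (Set.Ioo_subset_Ioo hu hv)
  have hIoo : ∀ u v : ℝ, u ≤ v → ∫ t in Set.Ioo u v, φ t = ∫ t in u..v, φ t := by
    intro u v huv
    rw [intervalIntegral.integral_of_le huv, integral_Ioc_eq_integral_Ioo]
  rw [hIoo x y ((h1.trans h2).trans h3), hIoo x m1 h1, hIoo m1 m2 h2, hIoo m2 y h3,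
    ← intervalIntegral.integral_add_adjacent_intervals (key x m1 le_rfl (h2.trans h3) h1)
      (key m1 y h1 le_rfl (h2.trans h3)),
    ← intervalIntegral.integral_add_adjacent_intervals (key m1 m2 h1 h3 h2)
      (key m2 y (h1.trans h2) le_rfl h3)]
  ring

lemma L1 {a b : ℝ} (hab : a < b) {φ : ℝ → ℂ} (hφ : IntegrableOn φ (Set.Ioo a b))
    {M : ℝ} (hM0 : 0 ≤ M)
    (h : ∀ x y, a < x → y < b → ‖∫ t in Set.Ioo x y, φ t‖ ≤ M) :
    ‖∫ t in Set.Ioo a b, φ t‖ ≤ M := by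
  set ε : ℕ → ℝ := fun n => (b - a) / 2 * (1 / (n + 1)) with hε
  have hεpos : ∀ n : ℕ, 0 < ε n := by
    intro n
    apply mul_pos (by linarith)
    positivity
  have hεle : ∀ n : ℕ, ε n ≤ (b - a) / 2 := by
    intro n
    rw [hε]
    have h1 : (1:ℝ) / (n + 1) ≤ 1 := by
      rw [div_le_one (by positivity)]
      simp
    nlinarith
  have hε0 : Filter.Tendsto ε Filter.atTop (nhds 0) := by
    have := tendsto_one_div_add_atTop_nhds_zero_nat.const_mul ((b - a) / 2)
    simpa [hε, one_div] using this
  set x : ℕ → ℝ := fun n => a + ε n with hx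
  set y : ℕ → ℝ := fun n => b - ε n with hy
  set f : ℕ → ℝ → ℂ := fun n => (Set.Ioo (x n) (y n)).indicator φ with hf
  have hsub : ∀ n, Set.Ioo (x n) (y n) ⊆ Set.Ioo a b := by
    intro n
    apply Set.Ioo_subset_Ioo <;> [skip; skip] <;> simp [hx, hy] <;> linarith [hεpos n]
  have hfint : ∀ n, Integrable (f n) volume := fun n =>
    ((hφ.mono_set (hsub n)).integrable_indicator measurableSet_Ioo)
  have hbound_int : Integrable ((Set.Ioo a b).indicator fun t => ‖φ t‖) volume :=
    (IntegrableOn.integrable_indicator hφ.norm measurableSet_Ioo)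
  have hptwise : ∀ t : ℝ, Filter.Tendsto (fun n => f n t) Filter.atTop
      (nhds (((Set.Ioo a b).indicator φ) t)) := by
    intro t
    by_cases ht : t ∈ Set.Ioo a b
    · have h1 : ∀ᶠ n in Filter.atTop, ε n < t - a :=
        hε0.eventually_lt_const (by linarith [ht.1] : (0:ℝ) < t - a)
      have h2 : ∀ᶠ n in Filter.atTop, ε n < b - t :=
        hε0.eventually_lt_const (by linarith [ht.2] : (0:ℝ) < b - t)
      rw [Set.indicator_of_mem ht]
      refine Filter.Tendsto.congr' ?_ tendsto_const_nhds
      filter_upwards [h1, h2] with n hn1 hn2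
      have : t ∈ Set.Ioo (x n) (y n) := by
        constructor <;> simp [hx, hy] <;> linarith
      rw [hf]
      simp [Set.indicator_of_mem this]
    · rw [Set.indicator_of_notMem ht]
      have : ∀ n, f n t = 0 := by
        intro n
        exact Set.indicator_of_notMem (fun hmem => ht (hsub n hmem)) _
      simp only [this]
      exact tendsto_const_nhds
  have hdom : ∀ n, ∀ᵐ t : ℝ, ‖f n t‖ ≤ ((Set.Ioo a b).indicator fun t => ‖φ t‖) t := by
    intro n
    filter_upwards with t
    by_cases ht : t ∈ Set.Ioo (x n) (y n)
    · rw [hf]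
      simp only [Set.indicator_of_mem ht, Set.indicator_of_mem (hsub n ht)]
      exact le_rfl
    · rw [hf]
      simp only [Set.indicator_of_notMem ht]
      simp only [norm_zero]
      exact Set.indicator_apply_nonneg fun _ => norm_nonneg _
  have htend : Filter.Tendsto (fun n => ∫ t, f n t) Filter.atTop
      (nhds (∫ t, ((Set.Ioo a b).indicator φ) t)) :=
    tendsto_integral_of_dominated_convergence _ (fun n => (hfint n).aestronglyMeasurable)
      hbound_int hdom (Filter.Eventually.of_forall hptwise)
  have heq1 : ∀ n, ∫ t, f n t = ∫ t in Set.Ioo (x n) (y n), φ t := fun n =>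
    integral_indicator measurableSet_Ioo
  have heq2 : ∫ t, ((Set.Ioo a b).indicator φ) t = ∫ t in Set.Ioo a b, φ t :=
    integral_indicator measurableSet_Ioo
  rw [← heq2]
  refine le_of_tendsto htend.norm ?_
  filter_upwards with n
  rw [heq1 n]
  refine h (x n) (y n) ?_ ?_
  · simp [hx]; linarith [hεpos n]
  · simp [hy]; linarith [hεpos n]

lemma P1 {a b : ℝ} {h h1 : ℝ → ℝ} {lam : ℝ} (hlam : 0 < lam)
    (hder : ∀ t ∈ Set.Ioo a b, HasDerivAt h (h1 t) t)
    (hmono : MonotoneOn h1 (Set.Ioo a b) ∨ AntitoneOn h1 (Set.Ioo a b))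
    (hge : ∀ t ∈ Set.Ioo a b, lam ≤ h1 t) :
    ∀ x y, a ≤ x → y ≤ b →
      ‖∫ t in Set.Ioo x y, Complex.exp (Complex.I * (h t : ℂ))‖ ≤ 4 / lam := by
  intro x y hax hyb
  have h4 : (0:ℝ) ≤ 4 / lam := by positivity
  rcases le_or_gt y x with hyx | hxy
  · rw [Set.Ioo_eq_empty (not_lt.2 hyx)]; simpa using h4
  have hcont : ContinuousOn h (Set.Ioo a b) := fun t ht =>
    ((hder t ht).continuousAt).continuousWithinAt
  have hφint : IntegrableOn (fun t => Complex.exp (Complex.I * (h t:ℂ))) (Set.Ioo a b) :=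
    int_exp hcont
  refine L1 hxy (hφint.mono_set (Set.Ioo_subset_Ioo hax hyb)) h4 ?_
  intro x' y' hxx' hy'y
  rcases le_or_gt y' x' with h' | hx'y'
  · rw [Set.Ioo_eq_empty (not_lt.2 h')]; simpa using h4
  have hsub : Set.Icc x' y' ⊆ Set.Ioo a b := fun t ht =>
    ⟨lt_of_le_of_lt hax (lt_of_lt_of_le hxx' ht.1), lt_of_le_of_lt ht.2 (lt_of_lt_of_le hy'y hyb)⟩
  set c : ℝ → ℝ := fun t => max x' (min y' t) with hcdef
  have hcmem : ∀ t, c t ∈ Set.Icc x' y' := by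
    intro t
    constructor
    · exact le_max_left _ _
    · exact max_le hx'y'.le (min_le_left _ _)
  have hcmono : Monotone c := fun s t hst =>
    max_le_max le_rfl (min_le_min le_rfl hst)
  have hceq : ∀ t ∈ Set.Icc x' y', c t = t := by
    intro t ht
    rw [hcdef]
    simp only [min_eq_right ht.2]  -- min y' t = t since t ≤ y'
    exact max_eq_right ht.1
  have hbd : ∀ t, lam ≤ h1 (c t) := fun t => hge _ (hsub (hcmem t))
  set φ : ℝ → ℂ := fun t => (Complex.I * (h1 (c t) : ℂ)) * Complex.exp (Complex.I * (h t : ℂ))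
    with hφdef
  -- measurability / boundedness of h1 ∘ c
  have hh1c : Monotone (fun t => h1 (c t)) ∨ Antitone (fun t => h1 (c t)) := by
    rcases hmono with hm | hm
    · exact Or.inl fun s t hst => hm (hsub (hcmem s)) (hsub (hcmem t)) (hcmono hst)
    · exact Or.inr fun s t hst => hm (hsub (hcmem s)) (hsub (hcmem t)) (hcmono hst)
  have hh1cmeas : Measurable (fun t => h1 (c t)) := by
    rcases hh1c with hm | hm
    · exact hm.measurable
    · exact hm.measurable
  have hh1cbd : ∀ t, |h1 (c t)| ≤ |h1 x'| + |h1 y'| := by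
    intro t
    have hx'mem : x' ∈ Set.Icc x' y' := ⟨le_rfl, hx'y'.le⟩
    have hy'mem : y' ∈ Set.Icc x' y' := ⟨hx'y'.le, le_rfl⟩
    rcases hmono with hm | hm
    · have l1 : h1 x' ≤ h1 (c t) := hm (hsub hx'mem) (hsub (hcmem t)) (hcmem t).1
      have l2 : h1 (c t) ≤ h1 y' := hm (hsub (hcmem t)) (hsub hy'mem) (hcmem t).2
      rw [abs_le]
      refine ⟨?_, ?_⟩
      · nlinarith [neg_abs_le (h1 x'), abs_nonneg (h1 y')]
      · nlinarith [le_abs_self (h1 y'), abs_nonneg (h1 x')]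
    · have l1 : h1 y' ≤ h1 (c t) := hm (hsub (hcmem t)) (hsub hy'mem) (hcmem t).2
      have l2 : h1 (c t) ≤ h1 x' := hm (hsub hx'mem) (hsub (hcmem t)) (hcmem t).1
      rw [abs_le]
      refine ⟨?_, ?_⟩
      · nlinarith [neg_abs_le (h1 y'), abs_nonneg (h1 x')]
      · nlinarith [le_abs_self (h1 x'), abs_nonneg (h1 y')]
  have hφintOn : IntegrableOn φ (Set.Ioo a b) := by
    refine Integrable.mono' (g := fun _ => |h1 x'| + |h1 y'|) ?_ ?_ ?_
    · exact integrableOn_const measure_Ioo_lt_top.ne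
    · refine AEStronglyMeasurable.mul ?_ ?_
      · refine AEStronglyMeasurable.mul aestronglyMeasurable_const ?_
        exact (Complex.measurable_ofReal.comp hh1cmeas).aestronglyMeasurable
      · exact ((Complex.continuous_exp.comp_continuousOn
          (continuousOn_const.mul (Complex.continuous_ofReal.comp_continuousOn
            hcont))).aestronglyMeasurable measurableSet_Ioo)
    · filter_upwards with t
      rw [hφdef]
      calc ‖Complex.I * (h1 (c t):ℂ) * Complex.exp (Complex.I * (h t:ℂ))‖
          = ‖Complex.I‖ * ‖(h1 (c t):ℂ)‖ * ‖Complex.exp (Complex.I * (h t:ℂ))‖ := by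
            rw [norm_mul, norm_mul]
        _ = |h1 (c t)| := by
            rw [norm_one_exp]
            simp
        _ ≤ _ := hh1cbd t
  -- FTC bound
  have hFTC : ∀ u v, x' ≤ u → v ≤ y' → u ≤ v →
      ∫ t in Set.Ioo u v, φ t
        = Complex.exp (Complex.I * (h v:ℂ)) - Complex.exp (Complex.I * (h u:ℂ)) := by
    intro u v hu hv huv
    rw [show ∫ t in Set.Ioo u v, φ t = ∫ t in u..v, φ t by
      rw [intervalIntegral.integral_of_le huv, integral_Ioc_eq_integral_Ioo]]
    refine intervalIntegral.integral_eq_sub_of_hasDerivAt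
      (f := fun s => Complex.exp (Complex.I * (h s:ℂ))) ?_ ?_
    · intro t ht
      rw [Set.uIcc_of_le huv] at ht
      have htmem : t ∈ Set.Icc x' y' := ⟨hu.trans ht.1, ht.2.trans hv⟩
      have hh : HasDerivAt (fun s => Complex.I * (h s : ℂ)) (Complex.I * (h1 t:ℂ)) t := by
        have := (hder t (hsub htmem)).ofReal_comp
        simpa using this.const_mul Complex.I
      have := hh.cexp
      rw [hφdef]
      simp only []
      rw [hceq t htmem]
      rw [mul_comm (Complex.I * _)]
      exact this
    · rw [intervalIntegrable_iff_integrableOn_Ioo_of_le huv]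
      exact hφintOn.mono_set fun t ht =>
        hsub ⟨hu.trans ht.1.le, ht.2.le.trans hv⟩
  have hM2 : ∀ u v, x' ≤ u → v ≤ y' → ‖∫ t in Set.Ioo u v, φ t‖ ≤ 2 := by
    intro u v hu hv
    rcases le_or_gt v u with h' | huv
    · rw [Set.Ioo_eq_empty (not_lt.2 h')]; simp
    · rw [hFTC u v hu hv huv.le]
      refine (norm_sub_le _ _).trans ?_
      rw [norm_one_exp, norm_one_exp]; norm_num
  -- weight
  set g : ℝ → ℝ := fun t => (h1 (c t))⁻¹ with hgdef
  have hgpos : ∀ t, 0 < g t ∧ g t ≤ 1 / lam := by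
    intro t
    constructor
    · rw [hgdef]; exact inv_pos.2 (lt_of_lt_of_le hlam (hbd t))
    · rw [hgdef, one_div]
      exact inv_anti₀ hlam (hbd t)
  have hgsmul : ∀ t ∈ Set.Ioo x' y', g t • φ t
      = Complex.I * Complex.exp (Complex.I * (h t : ℂ)) := by
    intro t ht
    have hne : (h1 (c t) : ℂ) ≠ 0 := by
      simp only [ne_eq, Complex.ofReal_eq_zero]
      exact ne_of_gt (lt_of_lt_of_le hlam (hbd t))
    rw [hgdef, hφdef]
    simp only [Complex.real_smul, Complex.ofReal_inv]
    field_simp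
  have hkey : ‖∫ t in Set.Ioo x' y', g t • φ t‖ ≤ (1/lam + 1/lam) * 2 := by
    have hφ' : IntegrableOn φ (Set.Ioo x' y') :=
      hφintOn.mono_set fun t ht => hsub ⟨ht.1.le, ht.2.le⟩
    rcases hh1c with hm | hm
    · -- h1∘c monotone, so g antitone; apply L2 to -g
      have hgmono : Monotone (fun t => -(g t)) := by
        intro s t hst
        simp only [neg_le_neg_iff]
        rw [hgdef]
        exact inv_anti₀ (lt_of_lt_of_le hlam (hbd s)) (hm hst)
      have := L2 hx'y'.le hgmono hφ' hM2
      have heq : ∫ t in Set.Ioo x' y', (fun t => -(g t)) t • φ t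
          = -∫ t in Set.Ioo x' y', g t • φ t := by
        rw [← integral_neg]
        congr 1; funext t; rw [neg_smul]
      rw [heq, norm_neg] at this
      refine this.trans ?_
      have g1 := hgpos x'
      have g2 := hgpos y'
      have : |-(g x')| ≤ 1/lam := by rw [abs_neg, abs_of_pos g1.1]; exact g1.2
      nlinarith [g1.1, g2.1, g1.2, g2.2, abs_of_pos g1.1]
    · have hgmono : Monotone g := by
        intro s t hst
        rw [hgdef]
        exact inv_anti₀ (lt_of_lt_of_le hlam (hbd t)) (hm hst)
      have := L2 hx'y'.le hgmono hφ' hM2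
      refine this.trans ?_
      have g1 := hgpos x'
      have g2 := hgpos y'
      nlinarith [g1.1, g2.1, g1.2, g2.2, abs_of_pos g1.1]
  have heq2 : ∫ t in Set.Ioo x' y', g t • φ t
      = Complex.I * ∫ t in Set.Ioo x' y', Complex.exp (Complex.I * (h t : ℂ)) := by
    rw [← integral_const_mul]
    exact setIntegral_congr_fun measurableSet_Ioo hgsmul
  rw [heq2] at hkey
  rw [norm_mul, Complex.norm_I, one_mul] at hkey
  have heq3 : (1/lam + 1/lam) * 2 = 4 / lam := by ring
  linarith [hkey]

lemma mvt_aux {a b lam : ℝ} {f f' : ℝ → ℝ} (hlam : 0 < lam)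
    (hder : ∀ t ∈ Set.Ioo a b, HasDerivAt f (f' t) t)
    (hge : ∀ t ∈ Set.Ioo a b, lam ≤ f' t) :
    ∀ s ∈ Set.Ioo a b, ∀ t ∈ Set.Ioo a b, s ≤ t → f s + lam * (t - s) ≤ f t := by
  have hmono : MonotoneOn (fun u => f u - lam * u) (Set.Ioo a b) := by
    have hd' : ∀ t ∈ Set.Ioo a b, HasDerivAt (fun u => f u - lam * u) (f' t - lam) t := by
      intro t ht
      have := (hder t ht).sub ((hasDerivAt_id' t).const_mul lam); rw [mul_one] at this; exact this
    apply monotoneOn_of_deriv_nonneg (convex_Ioo a b)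
    · intro t ht
      exact ((hd' t ht).continuousAt).continuousWithinAt
    · rw [interior_Ioo]
      intro t ht
      exact (hd' t ht).differentiableAt.differentiableWithinAt
    · rw [interior_Ioo]
      intro t ht
      rw [(hd' t ht).deriv]
      linarith [hge t ht]
  intro s hs t ht hst
  have := hmono hs ht hst
  simp only at this
  linarith

lemma rpow_step {lam : ℝ} (hlam : 0 < lam) {k : ℕ} (hk : 1 ≤ k) :
    (lam * lam ^ (-(1:ℝ)/(↑(k+1))) / 2) ^ (-(1:ℝ)/(k:ℝ))
      ≤ 2 * lam ^ (-(1:ℝ)/(↑(k+1))) := by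
  have hkpos : (0:ℝ) < k := by exact_mod_cast hk
  have hk1pos : (0:ℝ) < (k:ℝ)+1 := by linarith
  have e1 : lam * lam ^ (-(1:ℝ)/(↑(k+1))) = lam ^ ((k:ℝ)/((k:ℝ)+1)) := by
    nth_rewrite 1 [← Real.rpow_one lam]
    rw [← Real.rpow_add hlam]
    congr 1
    push_cast
    field_simp
    ring
  rw [e1, Real.div_rpow (Real.rpow_nonneg hlam.le _) (by norm_num : (0:ℝ) ≤ 2)]
  rw [← Real.rpow_mul hlam.le]
  have e2 : (k:ℝ)/((k:ℝ)+1) * (-(1:ℝ)/(k:ℝ)) = -(1:ℝ)/(↑(k+1)) := by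
    push_cast
    field_simp
  have e4 : (2:ℝ) ^ (-(1:ℝ)/(k:ℝ)) = ((2:ℝ) ^ ((1:ℝ)/(k:ℝ)))⁻¹ := by
    rw [← Real.rpow_neg (by norm_num : (0:ℝ) ≤ 2)]
    congr 1
    ring
  rw [e2, e4, div_inv_eq_mul]
  have e3 : (2:ℝ) ^ ((1:ℝ)/(k:ℝ)) ≤ 2 := by
    have := Real.rpow_le_rpow_of_exponent_le (by norm_num : (1:ℝ) ≤ 2)
      (by rw [div_le_one hkpos]; exact_mod_cast hk : (1:ℝ)/(k:ℝ) ≤ 1)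
    simpa using this
  have hpos : 0 ≤ lam ^ (-(1:ℝ)/(↑(k+1))) := (Real.rpow_pos_of_pos hlam _).le
  calc lam ^ (-(1:ℝ)/(↑(k+1))) * 2 ^ ((1:ℝ)/(k:ℝ))
      ≤ lam ^ (-(1:ℝ)/(↑(k+1))) * 2 := by
        exact mul_le_mul_of_nonneg_left e3 hpos
    _ = 2 * lam ^ (-(1:ℝ)/(↑(k+1))) := mul_comm _ _

lemma split_core {k : ℕ} (hk : 1 ≤ k) {C : ℝ} (hC : 0 ≤ C)
    {a b : ℝ} {hd : ℕ → ℝ → ℝ} {lam : ℝ} (hlam : 0 < lam)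
    (hder : ∀ i < k + 1, ∀ t ∈ Set.Ioo a b, HasDerivAt (hd i) (hd (i + 1) t) t)
    (hge : ∀ t ∈ Set.Ioo a b, lam ≤ hd (k + 1) t)
    (IH : ∀ x y : ℝ, a ≤ x → y ≤ b → ∀ mu : ℝ, 0 < mu →
      ((∀ t ∈ Set.Ioo x y, mu ≤ hd k t) ∨ (∀ t ∈ Set.Ioo x y, hd k t ≤ -mu)) →
      ‖∫ t in Set.Ioo x y, Complex.exp (Complex.I * (hd 0 t : ℂ))‖ ≤ C * mu ^ (-(1:ℝ)/(k:ℝ))) :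
    ∀ x y : ℝ, a ≤ x → y ≤ b →
      ‖∫ t in Set.Ioo x y, Complex.exp (Complex.I * (hd 0 t : ℂ))‖
        ≤ (4 * C + 2) * lam ^ (-(1:ℝ)/(↑(k+1))) := by
  intro x y hax hyb
  set δ := lam ^ (-(1:ℝ)/(↑(k+1):ℝ)) with hδ
  have hδpos : 0 < δ := Real.rpow_pos_of_pos hlam _
  have hRHS0 : (0:ℝ) ≤ (4*C+2) * δ := by positivity
  rcases le_or_gt y x with hyx | hxy
  · rw [Set.Ioo_eq_empty (not_lt.2 hyx)]; simpa using hRHS0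
  have hmvt : ∀ s ∈ Set.Ioo a b, ∀ t ∈ Set.Ioo a b, s ≤ t →
      hd k s + lam * (t - s) ≤ hd k t :=
    mvt_aux hlam (hder k (by omega)) hge
  set S : Set ℝ := {x} ∪ {t ∈ Set.Ioo x y | hd k t ≤ 0} with hS
  have hSne : S.Nonempty := ⟨x, Or.inl rfl⟩
  have hSbdd : BddAbove S := by
    refine ⟨y, ?_⟩
    rintro u (rfl | hu)
    · exact hxy.le
    · exact hu.1.2.le
  set cc := sSup S with hcc
  have hxc : x ≤ cc := le_csSup hSbdd (Or.inl rfl)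
  have hcy : cc ≤ y := by
    refine csSup_le hSne ?_
    rintro u (rfl | hu)
    · exact hxy.le
    · exact hu.1.2.le
  have hIooxy : Set.Ioo x y ⊆ Set.Ioo a b := Set.Ioo_subset_Ioo hax hyb
  have claimR : ∀ t ∈ Set.Ioo x y, cc + δ ≤ t → lam * δ / 2 ≤ hd k t := by
    intro t ht hct
    set s := t - δ/2 with hs
    have hsc : cc < s := by rw [hs]; linarith
    have hsmem : s ∈ Set.Ioo x y := ⟨lt_of_le_of_lt hxc hsc, by rw [hs]; linarith [ht.2]⟩
    have hsnot : s ∉ S := fun hmem => absurd (le_csSup hSbdd hmem) (not_le.2 hsc)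
    have hspos : 0 < hd k s := by
      by_contra hcon
      exact hsnot (Or.inr ⟨hsmem, le_of_not_gt hcon⟩)
    have hmvt' := hmvt s (hIooxy hsmem) t (hIooxy ht) (by rw [hs]; linarith)
    have hts : t - s = δ/2 := by rw [hs]; ring
    rw [hts] at hmvt'
    linarith
  have claimL : ∀ t ∈ Set.Ioo x y, t ≤ cc - δ → hd k t ≤ -(lam * δ / 2) := by
    intro t ht hct
    obtain ⟨u, huS, hu⟩ := exists_lt_of_lt_csSup hSne (show cc - δ/2 < cc by linarith)
    rcases huS with rfl | huS
    · exfalso; linarith [ht.1]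
    · have hut : t ≤ u := by linarith
      have hmvt' := hmvt t (hIooxy ht) u (hIooxy huS.1) hut
      have huneg := huS.2
      nlinarith
  set m1 := max x (min (cc - δ) y) with hm1
  set m2 := max m1 (min (cc + δ) y) with hm2
  have hm1y : m1 ≤ y := max_le hxy.le (min_le_right _ _)
  have hxm1 : x ≤ m1 := le_max_left _ _
  have hm12 : m1 ≤ m2 := le_max_left _ _
  have hm2y : m2 ≤ y := max_le hm1y (min_le_right _ _)
  have hcont0 : ContinuousOn (hd 0) (Set.Ioo a b) := fun t ht =>
    ((hder 0 (by omega) t ht).continuousAt).continuousWithinAt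
  have hint : IntegrableOn (fun t => Complex.exp (Complex.I * (hd 0 t : ℂ))) (Set.Ioo a b) :=
    int_exp hcont0
  rw [split3 hxm1 hm12 hm2y (hint.mono_set hIooxy)]
  have hmupos : 0 < lam * δ / 2 := by positivity
  have hmuval : C * (lam * δ / 2) ^ (-(1:ℝ)/(k:ℝ)) ≤ 2 * C * δ := by
    have := rpow_step hlam hk
    rw [← hδ] at this
    calc C * (lam * δ / 2) ^ (-(1:ℝ)/(k:ℝ)) ≤ C * (2 * δ) :=
          mul_le_mul_of_nonneg_left this hC
      _ = 2 * C * δ := by ring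
  have left : ‖∫ t in Set.Ioo x m1, Complex.exp (Complex.I * (hd 0 t:ℂ))‖ ≤ 2*C*δ := by
    rcases le_or_gt m1 x with hle | hlt
    · rw [Set.Ioo_eq_empty (not_lt.2 hle)]
      simp only [Measure.restrict_empty, integral_zero_measure, norm_zero]
      positivity
    · have hm1c : m1 ≤ cc - δ := by
        rcases max_choice x (min (cc - δ) y) with he | he
        · exfalso; rw [hm1] at hlt; rw [he] at hlt; exact lt_irrefl x hlt
        · rw [hm1, he]; exact min_le_left _ _
      refine (IH x m1 hax (hm1y.trans hyb) (lam*δ/2) hmupos (Or.inr ?_)).trans hmuval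
      intro t ht
      exact claimL t ⟨ht.1, lt_of_lt_of_le ht.2 hm1y⟩ (le_trans ht.2.le hm1c)
  have right : ‖∫ t in Set.Ioo m2 y, Complex.exp (Complex.I * (hd 0 t:ℂ))‖ ≤ 2*C*δ := by
    rcases le_or_gt y m2 with hle | hlt
    · rw [Set.Ioo_eq_empty (not_lt.2 hle)]
      simp only [Measure.restrict_empty, integral_zero_measure, norm_zero]
      positivity
    · have hm2c : cc + δ ≤ m2 := by
        rcases min_choice (cc + δ) y with he | he
        · have h7 : (cc + δ) ⊓ y ≤ m2 := by rw [hm2]; exact le_max_right _ _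
          rwa [he] at h7
        · exfalso
          have h7 : (cc + δ) ⊓ y ≤ m2 := by rw [hm2]; exact le_max_right _ _
          rw [he] at h7
          linarith
      refine (IH m2 y (hax.trans (hxm1.trans hm12)) hyb (lam*δ/2) hmupos (Or.inl ?_)).trans hmuval
      intro t ht
      refine claimR t ⟨lt_of_le_of_lt hxm1 (lt_of_le_of_lt hm12 ht.1), ht.2⟩ ?_
      linarith [ht.1, hm2c]
  have hm2m1 : m2 - m1 ≤ 2*δ := by
    rcases le_or_gt m2 m1 with hle | hlt
    · linarith
    · have hm2e : m2 = min (cc + δ) y := by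
        rcases max_choice m1 (min (cc + δ) y) with he | he
        · exfalso; rw [hm2] at hlt; rw [he] at hlt; exact lt_irrefl m1 hlt
        · rw [hm2, he]
      rcases min_choice (cc - δ) y with he | he
      · have h1 : (cc - δ) ⊓ y ≤ m1 := by rw [hm1]; exact le_max_right _ _
        rw [he] at h1
        have h2 : m2 ≤ cc + δ := by rw [hm2e]; exact min_le_left _ _
        linarith
      · have h1 : (cc - δ) ⊓ y ≤ m1 := by rw [hm1]; exact le_max_right _ _
        rw [he] at h1
        linarith
  have middle : ‖∫ t in Set.Ioo m1 m2, Complex.exp (Complex.I * (hd 0 t:ℂ))‖ ≤ 2*δ := by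
    have hb1 : ‖∫ t in Set.Ioo m1 m2, Complex.exp (Complex.I * (hd 0 t:ℂ))‖
        ≤ 1 * (volume (Set.Ioo m1 m2)).toReal := by
      refine norm_setIntegral_le_of_norm_le_const ?_ ?_
      · exact measure_Ioo_lt_top
      · intro t _
        rw [norm_one_exp]
    refine hb1.trans ?_
    rw [one_mul, Real.volume_Ioo, ENNReal.toReal_ofReal (by linarith)]
    exact hm2m1
  calc ‖(∫ t in Set.Ioo x m1, Complex.exp (Complex.I * (hd 0 t:ℂ)))
        + (∫ t in Set.Ioo m1 m2, Complex.exp (Complex.I * (hd 0 t:ℂ)))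
        + ∫ t in Set.Ioo m2 y, Complex.exp (Complex.I * (hd 0 t:ℂ))‖
      ≤ ‖(∫ t in Set.Ioo x m1, Complex.exp (Complex.I * (hd 0 t:ℂ)))
        + (∫ t in Set.Ioo m1 m2, Complex.exp (Complex.I * (hd 0 t:ℂ)))‖
        + ‖∫ t in Set.Ioo m2 y, Complex.exp (Complex.I * (hd 0 t:ℂ))‖ := norm_add_le _ _
    _ ≤ ‖∫ t in Set.Ioo x m1, Complex.exp (Complex.I * (hd 0 t:ℂ))‖
        + ‖∫ t in Set.Ioo m1 m2, Complex.exp (Complex.I * (hd 0 t:ℂ))‖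
        + ‖∫ t in Set.Ioo m2 y, Complex.exp (Complex.I * (hd 0 t:ℂ))‖ := by
          gcongr
          exact norm_add_le _ _
    _ ≤ 2*C*δ + 2*δ + 2*C*δ := add_le_add (add_le_add left middle) right
    _ = (4*C+2) * δ := by ring

def QP (k : ℕ) (C : ℝ) : Prop :=
  ∀ (a b : ℝ) (hd : ℕ → ℝ → ℝ) (lam : ℝ), 0 < lam →
    (∀ i < k, ∀ t ∈ Set.Ioo a b, HasDerivAt (hd i) (hd (i+1) t) t) →
    ((∀ t ∈ Set.Ioo a b, lam ≤ hd k t) ∨ (∀ t ∈ Set.Ioo a b, hd k t ≤ -lam)) →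
    ∀ x y, a ≤ x → y ≤ b →
      ‖∫ t in Set.Ioo x y, Complex.exp (Complex.I * (hd 0 t : ℂ))‖
        ≤ C * lam ^ (-(1:ℝ)/(k:ℝ))

lemma QP_step {k : ℕ} (hk : 1 ≤ k) {C : ℝ} (hC : 0 ≤ C) (hQ : QP k C) :
    QP (k+1) (4*C+2) := by
  intro a b hd lam hlam hder hsign x y hax hyb
  have IHgen : ∀ (hd' : ℕ → ℝ → ℝ),
      (∀ i < k+1, ∀ t ∈ Set.Ioo a b, HasDerivAt (hd' i) (hd' (i+1) t) t) →
      ∀ x' y' : ℝ, a ≤ x' → y' ≤ b → ∀ mu : ℝ, 0 < mu →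
      ((∀ t ∈ Set.Ioo x' y', mu ≤ hd' k t) ∨ (∀ t ∈ Set.Ioo x' y', hd' k t ≤ -mu)) →
      ‖∫ t in Set.Ioo x' y', Complex.exp (Complex.I * (hd' 0 t : ℂ))‖
        ≤ C * mu ^ (-(1:ℝ)/(k:ℝ)) := by
    intro hd' hder' x' y' hx' hy' mu hmu hs
    exact hQ x' y' hd' mu hmu
      (fun i hi t ht => hder' i (by omega) t (Set.Ioo_subset_Ioo hx' hy' ht)) hs
      x' y' le_rfl le_rfl
  rcases hsign with hpos | hneg
  · exact split_core hk hC hlam hder hpos (IHgen hd hder) x y hax hyb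
  · set hd' : ℕ → ℝ → ℝ := fun i t => -(hd i t) with hhd'
    have hder' : ∀ i < k+1, ∀ t ∈ Set.Ioo a b, HasDerivAt (hd' i) (hd' (i+1) t) t :=
      fun i hi t ht => (hder i hi t ht).neg
    have hge' : ∀ t ∈ Set.Ioo a b, lam ≤ hd' (k+1) t := by
      intro t ht
      have := hneg t ht
      simp only [hhd']
      linarith
    have key := split_core hk hC hlam hder' hge' (IHgen hd' hder') x y hax hyb
    simp only [hhd'] at key
    rwa [norm_neg_phase] at key

lemma QP_two : QP 2 18 := by
  have main : ∀ (a b : ℝ) (hd' : ℕ → ℝ → ℝ) (lam : ℝ), 0 < lam →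
      (∀ i < 2, ∀ t ∈ Set.Ioo a b, HasDerivAt (hd' i) (hd' (i+1) t) t) →
      (∀ t ∈ Set.Ioo a b, lam ≤ hd' 2 t) →
      ∀ x y, a ≤ x → y ≤ b →
      ‖∫ t in Set.Ioo x y, Complex.exp (Complex.I * (hd' 0 t : ℂ))‖
        ≤ 18 * lam ^ (-(1:ℝ)/(2:ℝ)) := by
    intro a b hd' lam hlam hder' hge' x y hax hyb
    have hmvt := mvt_aux hlam (hder' 1 (by omega)) hge'
    have hmono : MonotoneOn (hd' 1) (Set.Ioo a b) := by
      intro s hs t ht hst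
      have := hmvt s hs t ht hst
      nlinarith [mul_nonneg hlam.le (sub_nonneg.2 hst)]
    have IH1 : ∀ x' y' : ℝ, a ≤ x' → y' ≤ b → ∀ mu : ℝ, 0 < mu →
        ((∀ t ∈ Set.Ioo x' y', mu ≤ hd' 1 t) ∨ (∀ t ∈ Set.Ioo x' y', hd' 1 t ≤ -mu)) →
        ‖∫ t in Set.Ioo x' y', Complex.exp (Complex.I * (hd' 0 t : ℂ))‖
          ≤ 4 * mu ^ (-(1:ℝ)/((1:ℕ):ℝ)) := by
      intro x' y' hx' hy' mu hmu hs
      have hsub : Set.Ioo x' y' ⊆ Set.Ioo a b := Set.Ioo_subset_Ioo hx' hy'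
      have hder0 : ∀ t ∈ Set.Ioo x' y', HasDerivAt (hd' 0) (hd' 1 t) t :=
        fun t ht => hder' 0 (by omega) t (hsub ht)
      have hexp : mu ^ (-(1:ℝ)/((1:ℕ):ℝ)) = mu⁻¹ := by
        rw [show (-(1:ℝ)/((1:ℕ):ℝ)) = -1 by norm_num]
        exact Real.rpow_neg_one mu
      rw [hexp]
      rcases hs with hp | hn
      · have := P1 hmu hder0 (Or.inl (hmono.mono hsub)) hp x' y' le_rfl le_rfl
        rw [div_eq_mul_inv] at this
        exact this
      · have hder0' : ∀ t ∈ Set.Ioo x' y', HasDerivAt (fun u => -(hd' 0 u)) (-(hd' 1 t)) t :=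
          fun t ht => (hder0 t ht).neg
        have hanti : AntitoneOn (fun t => -(hd' 1 t)) (Set.Ioo x' y') := by
          intro s hs t ht hst
          simp only [neg_le_neg_iff]
          exact hmono (hsub hs) (hsub ht) hst
        have hge2 : ∀ t ∈ Set.Ioo x' y', mu ≤ -(hd' 1 t) := by
          intro t ht; linarith [hn t ht]
        have := P1 hmu hder0' (Or.inr hanti) hge2 x' y' le_rfl le_rfl
        rw [norm_neg_phase] at this
        rw [div_eq_mul_inv] at this
        exact this
    have key := split_core (k := 1) le_rfl (by norm_num : (0:ℝ) ≤ 4) hlam hder' hge'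
      IH1 x y hax hyb
    convert key using 2 <;> norm_num
  intro a b hd lam hlam hder hsign x y hax hyb
  rcases hsign with hpos | hneg
  · exact main a b hd lam hlam hder hpos x y hax hyb
  · set hd' : ℕ → ℝ → ℝ := fun i t => -(hd i t) with hhd'
    have hder' : ∀ i < 2, ∀ t ∈ Set.Ioo a b, HasDerivAt (hd' i) (hd' (i+1) t) t :=
      fun i hi t ht => (hder i hi t ht).neg
    have hge' : ∀ t ∈ Set.Ioo a b, lam ≤ hd' 2 t := by
      intro t ht
      have := hneg t ht
      simp only [hhd']
      linarith
    have key := main a b hd' lam hlam hder' hge' x y hax hyb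
    simp only [hhd'] at key
    rwa [norm_neg_phase] at key

lemma QP_all : ∀ k : ℕ, 2 ≤ k → ∃ C : ℝ, 0 ≤ C ∧ QP k C := by
  intro k hk
  induction k, hk using Nat.le_induction with
  | base => exact ⟨18, by norm_num, QP_two⟩
  | succ n hn ih =>
    obtain ⟨C, hC, hQ⟩ := ih
    exact ⟨4*C+2, by linarith, QP_step (by omega) hC hQ⟩

lemma mono_smul_int {g : ℝ → ℝ} (hg : Monotone g) {a b : ℝ} {φ : ℝ → ℂ}
    (hφ : IntegrableOn φ (Set.Ioo a b)) :
    IntegrableOn (fun t => g t • φ t) (Set.Ioo a b) := by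
  refine Integrable.mono' (g := fun t => (|g a| + |g b|) * ‖φ t‖) ?_ ?_ ?_
  · exact hφ.norm.const_mul _
  · exact (hg.measurable.aemeasurable.aestronglyMeasurable).smul hφ.aestronglyMeasurable
  · filter_upwards [ae_restrict_mem measurableSet_Ioo] with t ht
    rw [norm_smul, Real.norm_eq_abs]
    refine mul_le_mul_of_nonneg_right ?_ (norm_nonneg _)
    have l1 : g a ≤ g t := hg ht.1.le
    have l2 : g t ≤ g b := hg ht.2.le
    rw [abs_le]
    constructor
    · nlinarith [neg_abs_le (g a), abs_nonneg (g b)]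
    · nlinarith [le_abs_self (g b), abs_nonneg (g a)]

lemma L3 {a b : ℝ} (hab : a < b) {w : ℝ → ℝ} (hw : BoundedVariationOn w (Set.Icc a b))
    {φ : ℝ → ℂ} (hφ : IntegrableOn φ (Set.Ioo a b)) {M : ℝ}
    (hM : ∀ x y, a ≤ x → y ≤ b → ‖∫ t in Set.Ioo x y, φ t‖ ≤ M) :
    ‖∫ t in Set.Ioo a b, w t • φ t‖
      ≤ (2 * (eVariationOn w (Set.Icc a b)).toReal + 2*|w a| + |w b|) * M := by
  have hM0 : 0 ≤ M := le_trans (by simp) (hM a a le_rfl hab.le)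
  have hloc : LocallyBoundedVariationOn w (Set.Icc a b) := hw.locallyBoundedVariationOn
  have hamem : a ∈ Set.Icc a b := Set.left_mem_Icc.2 hab.le
  have hbmem : b ∈ Set.Icc a b := Set.right_mem_Icc.2 hab.le
  set V := (eVariationOn w (Set.Icc a b)).toReal with hV
  have hV0 : 0 ≤ V := ENNReal.toReal_nonneg
  set p : ℝ → ℝ := variationOnFromTo w (Set.Icc a b) a with hp
  have hpmono : MonotoneOn p (Set.Icc a b) := variationOnFromTo.monotoneOn hloc hamem
  have hqmono : MonotoneOn (fun t => p t - w t) (Set.Icc a b) := by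
    have := variationOnFromTo.sub_self_monotoneOn hloc hamem
    intro s hs t ht hst
    exact this hs ht hst
  have hpa : p a = 0 := variationOnFromTo.self w _ a
  have hpb : p b = V := by
    rw [hp, variationOnFromTo.eq_of_le w _ hab.le, Set.inter_self]
  -- clamp
  set cl : ℝ → ℝ := fun t => max a (min b t) with hcl
  have hclmem : ∀ t, cl t ∈ Set.Icc a b :=
    fun t => ⟨le_max_left _ _, max_le hab.le (min_le_left _ _)⟩
  have hclmono : Monotone cl := fun s t hst => max_le_max le_rfl (min_le_min le_rfl hst)
  have hcleq : ∀ t ∈ Set.Icc a b, cl t = t := by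
    intro t ht
    rw [hcl]
    simp only [min_eq_right ht.2]
    exact max_eq_right ht.1
  set pt : ℝ → ℝ := fun t => p (cl t) with hptdef
  set qt : ℝ → ℝ := fun t => p (cl t) - w (cl t) with hqtdef
  have hptm : Monotone pt := fun s t hst =>
    hpmono (hclmem s) (hclmem t) (hclmono hst)
  have hqtm : Monotone qt := fun s t hst =>
    hqmono (hclmem s) (hclmem t) (hclmono hst)
  have hcla : cl a = a := hcleq a hamem
  have hclb : cl b = b := hcleq b hbmem
  have heqw : ∫ t in Set.Ioo a b, w t • φ t
      = (∫ t in Set.Ioo a b, pt t • φ t) - ∫ t in Set.Ioo a b, qt t • φ t := by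
    rw [← integral_sub (mono_smul_int hptm hφ) (mono_smul_int hqtm hφ)]
    refine setIntegral_congr_fun measurableSet_Ioo fun t ht => ?_
    have h1 : cl t = t := hcleq t ⟨ht.1.le, ht.2.le⟩
    rw [hptdef, hqtdef]
    simp only [h1]
    rw [← sub_smul]
    congr 1
    ring
  have hbp := L2 hab.le hptm hφ hM
  have hbq := L2 hab.le hqtm hφ hM
  rw [hptdef] at hbp
  rw [hqtdef] at hbq
  simp only [hcla, hclb, hpa, hpb] at hbp hbq
  rw [heqw]
  refine (norm_sub_le _ _).trans ?_
  have e1 : |(0:ℝ)| = 0 := abs_zero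
  rw [e1] at hbp
  have hfin : ‖∫ t in Set.Ioo a b, pt t • φ t‖ + ‖∫ t in Set.Ioo a b, qt t • φ t‖
      ≤ (0 + (V - 0)) * M + (|0 - w a| + (V - w b - (0 - w a))) * M := by
    refine add_le_add ?_ ?_
    · convert hbp using 2 <;> rw [hptdef] <;> simp [hcla, hclb, hpa, hpb]
    · convert hbq using 2 <;> rw [hqtdef] <;> simp [hcla, hclb, hpa, hpb]
  refine hfin.trans ?_
  have h2 : |0 - w a| = |w a| := by rw [zero_sub, abs_neg]
  rw [h2]
  nlinarith [le_abs_self (w a), neg_abs_le (w a), le_abs_self (w b), neg_abs_le (w b), hM0, hV0]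


/-- The `r`-th derivative test for exponential integrals (van der Corput; Huxley,
Lemmas 5.1.3–5.1.4). Here `hd i` plays the role of the `i`-th derivative of `h` on
`(a,b)`, `w` has bounded variation on `[a,b]`, and `V₀` is the total variation of `w`
on `[a,b]` plus the maximum modulus of `w` there. -/
theorem statement_5 (r : ℕ) (hr : 2 ≤ r) :
    ∃ C : ℝ, ∀ (a b : ℝ), a < b →
      ∀ (w h : ℝ → ℝ) (hd : ℕ → ℝ → ℝ) (lam0 : ℝ),
      0 < lam0 →
      hd 0 = h →
      (∀ i < r, ∀ x ∈ Set.Ioo a b, HasDerivAt (hd i) (hd (i + 1) x) x) →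
      (∀ x ∈ Set.Ioo a b, lam0 ≤ hd r x) →
      BoundedVariationOn w (Set.Icc a b) →
      ‖∫ x in a..b, (w x : ℂ) * Complex.exp (Complex.I * (h x : ℂ))‖ ≤
        C * ((eVariationOn w (Set.Icc a b)).toReal +
              sSup ((fun x => |w x|) '' Set.Icc a b)) / lam0 ^ ((1 : ℝ) / r) := by
  obtain ⟨Cr, hCr0, hQ⟩ := QP_all r hr
  refine ⟨3 * Cr, ?_⟩
  intro a b hab w h hd lam0 hlam0 hhd0 hder hge hw
  subst hhd0
  set V := (eVariationOn w (Set.Icc a b)).toReal with hV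
  have hV0 : 0 ≤ V := ENNReal.toReal_nonneg
  set S := sSup ((fun x => |w x|) '' Set.Icc a b) with hS
  have hamem : a ∈ Set.Icc a b := Set.left_mem_Icc.2 hab.le
  have hbmem : b ∈ Set.Icc a b := Set.right_mem_Icc.2 hab.le
  have hbb : ∀ x ∈ Set.Icc a b, |w x| ≤ |w a| + V := by
    intro x hx
    have h1 := eVariationOn.edist_le w hx hamem
    rw [edist_dist] at h1
    have h2 : dist (w x) (w a) ≤ V :=
      (ENNReal.ofReal_le_iff_le_toReal hw).1 h1
    rw [Real.dist_eq] at h2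
    calc |w x| = |w a + (w x - w a)| := by ring_nf
      _ ≤ |w a| + |w x - w a| := abs_add_le _ _
      _ ≤ |w a| + V := by linarith
  have hbdd : BddAbove ((fun x => |w x|) '' Set.Icc a b) := by
    refine ⟨|w a| + V, ?_⟩
    rintro z ⟨x, hx, rfl⟩
    exact hbb x hx
  have haS : |w a| ≤ S := le_csSup hbdd ⟨a, hamem, rfl⟩
  have hbS : |w b| ≤ S := le_csSup hbdd ⟨b, hbmem, rfl⟩
  have hS0 : 0 ≤ S := le_trans (abs_nonneg _) haS
  set M := Cr * lam0 ^ (-(1:ℝ)/(r:ℝ)) with hM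
  have hMpos : 0 ≤ M := mul_nonneg hCr0 (Real.rpow_pos_of_pos hlam0 _).le
  have hMb : ∀ x y : ℝ, a ≤ x → y ≤ b →
      ‖∫ t in Set.Ioo x y, Complex.exp (Complex.I * (hd 0 t : ℂ))‖ ≤ M :=
    fun x y hx hy => hQ a b hd lam0 hlam0 hder (Or.inl hge) x y hx hy
  have hcont : ContinuousOn (hd 0) (Set.Ioo a b) := fun t ht =>
    ((hder 0 (by omega) t ht).continuousAt).continuousWithinAt
  have hφ : IntegrableOn (fun t => Complex.exp (Complex.I * (hd 0 t : ℂ))) (Set.Ioo a b) :=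
    int_exp hcont
  have hL3 := L3 hab hw hφ hMb
  have heq : ∫ x in a..b, (w x : ℂ) * Complex.exp (Complex.I * (hd 0 x : ℂ))
      = ∫ t in Set.Ioo a b, w t • Complex.exp (Complex.I * (hd 0 t : ℂ)) := by
    rw [intervalIntegral.integral_of_le hab.le, integral_Ioc_eq_integral_Ioo]
    refine setIntegral_congr_fun measurableSet_Ioo fun t _ => ?_
    rw [Complex.real_smul]
  rw [heq]
  refine hL3.trans ?_
  have hco : 2 * V + 2*|w a| + |w b| ≤ 3 * (V + S) := by linarith
  have hstep : (2 * V + 2*|w a| + |w b|) * M ≤ 3 * (V + S) * M :=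
    mul_le_mul_of_nonneg_right hco hMpos
  refine hstep.trans ?_
  have hrw : lam0 ^ (-(1:ℝ)/(r:ℝ)) = (lam0 ^ ((1:ℝ)/(r:ℝ)))⁻¹ := by
    rw [← Real.rpow_neg hlam0.le]
    congr 1
    ring
  rw [hM, hrw]
  rw [div_eq_mul_inv]
  ring_nf
  exact le_rfl
end

section
/- Assume (2κ+1)/3 ≤ λ ≤ 3κ/4. Then for all integers m, n₁, n₂, the character sum C(m,n₁,n₂) vanishes unless gcd(n₁ n₂, p) = 1 and p^{κ−λ} divides m. -/
open MeasureTheory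

/-- `e(x) = e^{2πix}`. -/
noncomputable def ee (x : ℝ) : ℂ := Complex.exp (2 * Real.pi * Complex.I * x)

/-- The inner character sum `C*(m,n)` of Lemma 6.1 of the paper (due to Sun):
`C*(m,n) = Σ_{c mod p^κ} χ̄(c) Σ*_{b mod p^λ}
  e(−(b p^{κ−λ}+cq)^{-1} m q̄ / p^κ) e(n q̄ b̄ / p^λ)`,
with all inverses taken canonically in `ZMod`. -/
noncomputable def Cstar (p κ lam q : ℕ) (χ : DirichletCharacter ℂ (p ^ κ)) (m n : ℤ) : ℂ :=
  ∑ c ∈ Finset.range (p ^ κ), (starRingEnd ℂ) (χ (c : ZMod (p ^ κ))) *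
    ∑ b ∈ (Finset.range (p ^ lam)).filter (fun b => Nat.gcd b p = 1),
      ee ((ZMod.val (-(((b : ZMod (p ^ κ)) * (p : ZMod (p ^ κ)) ^ (κ - lam)
              + (c : ZMod (p ^ κ)) * (q : ZMod (p ^ κ)))⁻¹ * (m : ZMod (p ^ κ))
              * (q : ZMod (p ^ κ))⁻¹)) : ℝ) / (p : ℝ) ^ κ) *
      ee ((ZMod.val ((n : ZMod (p ^ lam)) * (q : ZMod (p ^ lam))⁻¹
              * (b : ZMod (p ^ lam))⁻¹) : ℝ) / (p : ℝ) ^ lam)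

/-- The character sum `C(m,n₁,n₂)` of Lemma 6.1 of the paper:
`C(m,n₁,n₂) = Σ_{γ mod p^κ} C*(γ,n₁) conj(C*(γ,n₂))
  e(m (n₁ p^{3κ−λ} \overline{p^{κ+λ}} + γ d d̄)/(d p^κ))`,
where `\overline{p^{κ+λ}}` is the canonical inverse of `p^{κ+λ}` mod `d` and
`d̄` the canonical inverse of `d` mod `p^κ`. -/
noncomputable def CC (p κ lam q d : ℕ) (χ : DirichletCharacter ℂ (p ^ κ))
    (m n₁ n₂ : ℤ) : ℂ :=
  ∑ γ ∈ Finset.range (p ^ κ),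
    Cstar p κ lam q χ (γ : ℤ) n₁ * (starRingEnd ℂ) (Cstar p κ lam q χ (γ : ℤ) n₂) *
      ee ((m : ℝ) * ((n₁ : ℝ) * (p : ℝ) ^ (3 * κ - lam) *
              (ZMod.val (((p : ZMod d) ^ (κ + lam))⁻¹) : ℝ)
            + (γ : ℝ) * (d : ℝ) * (ZMod.val ((d : ZMod (p ^ κ))⁻¹) : ℝ))
          / ((d : ℝ) * (p : ℝ) ^ κ))


lemma ee_add (x y : ℝ) : ee (x + y) = ee x * ee y := by
  simp only [ee, ← Complex.exp_add]
  push_cast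
  ring_nf

lemma ee_zero : ee 0 = 1 := by simp [ee]

lemma ee_int (n : ℤ) : ee n = 1 := by
  have h := Complex.exp_int_mul_two_pi_mul_I n
  rw [ee, ← h]
  push_cast
  ring_nf

lemma ee_add_int (x : ℝ) (n : ℤ) : ee (x + n) = ee x := by
  rw [ee_add, ee_int, mul_one]

lemma ee_eq_one_iff {x : ℝ} : ee x = 1 ↔ ∃ n : ℤ, x = n := by
  rw [ee, Complex.exp_eq_one_iff]
  constructor
  · rintro ⟨n, hn⟩
    refine ⟨n, ?_⟩
    have h2 : (2 * (Real.pi:ℂ) * Complex.I) ≠ 0 := by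
      simp [Real.pi_ne_zero, Complex.I_ne_zero]
    have h3 : (2 * (Real.pi:ℂ) * Complex.I) * x = (2 * (Real.pi:ℂ) * Complex.I) * n := by
      rw [hn]; ring
    exact_mod_cast mul_left_cancel₀ h2 h3
  · rintro ⟨n, hn⟩
    exact ⟨n, by rw [hn]; push_cast; ring⟩

noncomputable def psi (N : ℕ) (x : ZMod N) : ℂ := ee ((x.val : ℝ) / N)

lemma psi_zero (N : ℕ) [NeZero N] : psi N 0 = 1 := by
  simp [psi, ee_zero]

lemma psi_add (N : ℕ) [NeZero N] (x y : ZMod N) : psi N (x + y) = psi N x * psi N y := by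
  have hN : (N:ℝ) ≠ 0 := Nat.cast_ne_zero.mpr (NeZero.ne N)
  rw [psi, psi, psi, ← ee_add]
  set k : ℕ := (x.val + y.val) / N with hk
  have hNat : x.val + y.val = (x+y).val + N * k := by
    rw [ZMod.val_add, hk]
    exact (Nat.mod_add_div _ _).symm
  have hR : (x.val:ℝ) + (y.val:ℝ) = ((x+y).val:ℝ) + (k:ℝ) * N := by
    rw [mul_comm]
    exact_mod_cast congrArg (Nat.cast : ℕ → ℝ) hNat
  have key : (x.val : ℝ) / N + (y.val : ℝ) / N
      = ((x+y).val : ℝ) / N + ((k : ℤ) : ℝ) := by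
    rw [← add_div, hR, add_div, mul_div_assoc, div_self hN, mul_one]
    norm_num
  rw [key, ee_add_int]

lemma psi_natmul (N : ℕ) [NeZero N] (r : ℕ) (x : ZMod N) :
    psi N ((r : ZMod N) * x) = psi N x ^ r := by
  induction r with
  | zero => simp [psi_zero]
  | succ n ih =>
      push_cast
      rw [add_mul, one_mul, psi_add, ih, pow_succ]

lemma psi_ne_one (N : ℕ) [NeZero N] {x : ZMod N} (hx : x ≠ 0) : psi N x ≠ 1 := by
  intro h
  rw [psi, ee_eq_one_iff] at h
  obtain ⟨n, hn⟩ := h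
  have hlt : (x.val : ℝ) / N < 1 := by
    rw [div_lt_one (by exact_mod_cast NeZero.pos N)]
    exact_mod_cast ZMod.val_lt x
  have hge : 0 < (x.val : ℝ) / N := by
    have hv : 0 < x.val := Nat.pos_of_ne_zero (fun h0 => hx ((ZMod.val_eq_zero x).mp h0))
    apply div_pos
    · exact_mod_cast hv
    · exact_mod_cast NeZero.pos N
  rw [hn] at hlt hge
  have h1 : 0 < n := by exact_mod_cast hge
  have h2 : n < 1 := by exact_mod_cast hlt
  omega

lemma sum_range_eq_sum_zmod (N : ℕ) [NeZero N] (f : ZMod N → ℂ) :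
    ∑ c ∈ Finset.range N, f (c : ZMod N) = ∑ c : ZMod N, f c := by
  refine Finset.sum_nbij' (fun c => (c : ZMod N)) (fun x => x.val) ?_ ?_ ?_ ?_ ?_
  · intro a _; exact Finset.mem_univ _
  · intro a _; exact Finset.mem_range.mpr (ZMod.val_lt a)
  · intro a ha; exact ZMod.val_cast_of_lt (Finset.mem_range.mp ha)
  · intro a _; simp [ZMod.natCast_val, ZMod.cast_id]
  · intro a _; rfl

section ZModHelpers

variable {N : ℕ}

lemma zmod_inv_add_nilp (x y : ZMod N) (hx : IsUnit x) (hy : y * y = 0) :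
    (x + y)⁻¹ = x⁻¹ - x⁻¹ * x⁻¹ * y := by
  apply ZMod.inv_eq_of_mul_eq_one
  have h1 : x * x⁻¹ = 1 := ZMod.mul_inv_of_unit x hx
  linear_combination (1 - x⁻¹ * y) * h1 - x⁻¹ * x⁻¹ * hy

lemma isUnit_add_sq_zero {x y : ZMod N} (hx : IsUnit x) (hy : y * y = 0) :
    IsUnit (x + y) :=
  IsNilpotent.isUnit_add_left_of_commute ⟨2, by rw [pow_two]; exact hy⟩ hx (Commute.all _ _)

lemma zmod_mul_inv_unit (x y : ZMod N) (hx : IsUnit x) (hy : IsUnit y) :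
    (x * y)⁻¹ = x⁻¹ * y⁻¹ := by
  apply ZMod.inv_eq_of_mul_eq_one
  have h1 : x * x⁻¹ = 1 := ZMod.mul_inv_of_unit x hx
  have h2 : y * y⁻¹ = 1 := ZMod.mul_inv_of_unit y hy
  linear_combination (y * y⁻¹) * h1 + h2

lemma isUnit_inv_zmod {x : ZMod N} (hx : IsUnit x) : IsUnit x⁻¹ :=
  IsUnit.of_mul_eq_one _ (ZMod.inv_mul_of_unit x hx)

end ZModHelpers

section PPow

variable {p κ : ℕ}

lemma ppow_zero (hκ : 1 ≤ κ) {j : ℕ} (hj : κ ≤ j) : (p : ZMod (p ^ κ)) ^ j = 0 := by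
  have : ((p ^ j : ℕ) : ZMod (p ^ κ)) = 0 := by
    rw [ZMod.natCast_eq_zero_iff]
    exact pow_dvd_pow p hj
  simpa using this

lemma nonunit_eq_p_mul (hp : p.Prime) (hκ : 1 ≤ κ) {μ : ZMod (p ^ κ)}
    (hμ : ¬ IsUnit μ) : ∃ μ₀ : ZMod (p ^ κ), μ = (p : ZMod (p ^ κ)) * μ₀ := by
  haveI : NeZero (p ^ κ) := ⟨pow_ne_zero _ hp.pos.ne'⟩
  have hval : ¬ Nat.Coprime μ.val (p ^ κ) := by
    intro h
    apply hμ
    have : IsUnit ((μ.val : ℕ) : ZMod (p ^ κ)) := (ZMod.isUnit_iff_coprime _ _).mpr h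
    rwa [ZMod.natCast_val, ZMod.cast_id] at this
  have hpv : p ∣ μ.val := by
    by_contra hnd
    exact hval (Nat.Coprime.pow_right _ ((hp.coprime_iff_not_dvd).mpr hnd).symm)
  obtain ⟨t, ht⟩ := hpv
  refine ⟨(t : ZMod (p ^ κ)), ?_⟩
  have : μ = ((μ.val : ℕ) : ZMod (p ^ κ)) := by rw [ZMod.natCast_val, ZMod.cast_id]
  rw [this, ht]
  push_cast
  ring

lemma unit_not_dvd_val (hp : p.Prime) (hκ : 1 ≤ κ) {x : ZMod (p ^ κ)}
    (hx : IsUnit x) : ¬ p ∣ x.val := by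
  haveI : NeZero (p ^ κ) := ⟨pow_ne_zero _ hp.pos.ne'⟩
  intro hdvd
  have h1 : Nat.Coprime x.val (p ^ κ) := by
    have : IsUnit ((x.val : ℕ) : ZMod (p ^ κ)) := by
      rwa [ZMod.natCast_val, ZMod.cast_id]
    exact (ZMod.isUnit_iff_coprime _ _).mp this
  have h2 : Nat.Coprime x.val p := Nat.Coprime.coprime_dvd_right (dvd_pow_self p (by omega)) h1
  have h3 : p ∣ Nat.gcd x.val p := Nat.dvd_gcd hdvd dvd_rfl
  rw [Nat.Coprime] at h2
  rw [h2] at h3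
  have := Nat.le_of_dvd one_pos h3
  have := hp.two_le
  omega

end PPow

section Prim

lemma prim_exists_v {p κ : ℕ} (hp : p.Prime) (hκ : 1 ≤ κ)
    (χ : DirichletCharacter ℂ (p ^ κ)) (hχ : χ.IsPrimitive) :
    ∃ v : ZMod (p ^ κ), χ (1 + (p : ZMod (p ^ κ)) ^ (κ - 1) * v) ≠ 1 := by
  haveI : NeZero (p ^ κ) := ⟨pow_ne_zero _ hp.pos.ne'⟩
  have hdvd : p ^ (κ - 1) ∣ p ^ κ := pow_dvd_pow p (by omega)
  have hne : ¬ χ.FactorsThrough (p ^ (κ - 1)) := by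
    intro h
    have hle : χ.conductor ≤ p ^ (κ - 1) := Nat.sInf_le h
    rw [hχ] at hle
    have : p ^ (κ - 1) < p ^ κ := Nat.pow_lt_pow_right hp.one_lt (by omega)
    omega
  rw [DirichletCharacter.factorsThrough_iff_ker_unitsMap hdvd] at hne
  rw [SetLike.not_le_iff_exists] at hne
  obtain ⟨u, hu1, hu2⟩ := hne
  rw [MonoidHom.mem_ker] at hu1
  rw [MonoidHom.mem_ker] at hu2
  -- from hu1 : unitsMap hdvd u = 1
  have hcast : ZMod.castHom hdvd (ZMod (p ^ (κ - 1))) ((u : ZMod (p ^ κ)) - 1) = 0 := by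
    have h1 : ((ZMod.unitsMap hdvd u : ZMod (p ^ (κ - 1)))) = 1 := by rw [hu1]; rfl
    rw [ZMod.unitsMap_def] at h1
    rw [map_sub, map_one]
    simp only [Units.coe_map, MonoidHom.coe_coe] at h1
    rw [h1, sub_self]
  set x : ZMod (p ^ κ) := (u : ZMod (p ^ κ)) with hx
  have hval : ((x - 1).val : ZMod (p ^ (κ - 1))) = 0 := by
    have : x - 1 = (((x - 1).val : ℕ) : ZMod (p ^ κ)) := by
      rw [ZMod.natCast_val, ZMod.cast_id]
    rw [this] at hcast
    rwa [map_natCast] at hcast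
  rw [ZMod.natCast_eq_zero_iff] at hval
  obtain ⟨t, ht⟩ := hval
  refine ⟨(t : ZMod (p ^ κ)), ?_⟩
  have hxeq : 1 + (p : ZMod (p ^ κ)) ^ (κ - 1) * (t : ZMod (p ^ κ)) = x := by
    have h2 : x - 1 = (((x - 1).val : ℕ) : ZMod (p ^ κ)) := by
      rw [ZMod.natCast_val, ZMod.cast_id]
    rw [ht] at h2
    push_cast at h2
    linear_combination h2.symm
  rw [hxeq]
  intro hone
  apply hu2
  have : (χ.toUnitHom u : ℂ) = χ x := MulChar.coe_toUnitHom χ u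
  rw [hone] at this
  exact Units.ext (by rw [this]; rfl)

end Prim

noncomputable def Xel (p κ lam q : ℕ) (c : ZMod (p ^ κ)) (b : ZMod (p ^ lam)) : ZMod (p ^ κ) :=
  (b.val : ZMod (p ^ κ)) * (p : ZMod (p ^ κ)) ^ (κ - lam) + c * (q : ZMod (p ^ κ))

noncomputable def Tt (p κ lam q : ℕ) (χ : DirichletCharacter ℂ (p ^ κ))
    (μ : ZMod (p ^ κ)) (n : ℤ) (c : ZMod (p ^ κ)) (b : ZMod (p ^ lam)) : ℂ :=
  (starRingEnd ℂ) (χ c) * psi (p ^ κ) (-((Xel p κ lam q c b)⁻¹ * μ * (q : ZMod (p ^ κ))⁻¹))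
    * psi (p ^ lam) ((n : ZMod (p ^ lam)) * (q : ZMod (p ^ lam))⁻¹ * b⁻¹)

noncomputable def Cz (p κ lam q : ℕ) [NeZero (p ^ κ)] [NeZero (p ^ lam)]
    (χ : DirichletCharacter ℂ (p ^ κ)) (μ : ZMod (p ^ κ)) (n : ℤ) : ℂ :=
  ∑ c : ZMod (p ^ κ), ∑ b ∈ Finset.univ.filter (fun b : ZMod (p ^ lam) => IsUnit b),
    Tt p κ lam q χ μ n c b

lemma Cstar_eq (p κ lam q : ℕ) (hp : p.Prime) (hlam : 1 ≤ lam)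
    (χ : DirichletCharacter ℂ (p ^ κ)) (m n : ℤ) :
    haveI : NeZero (p ^ κ) := ⟨pow_ne_zero _ hp.pos.ne'⟩
    haveI : NeZero (p ^ lam) := ⟨pow_ne_zero _ hp.pos.ne'⟩
    Cstar p κ lam q χ m n = Cz p κ lam q χ ((m : ZMod (p ^ κ))) n := by
  haveI : NeZero (p ^ κ) := ⟨pow_ne_zero _ hp.pos.ne'⟩
  haveI : NeZero (p ^ lam) := ⟨pow_ne_zero _ hp.pos.ne'⟩
  rw [Cstar, Cz, ← sum_range_eq_sum_zmod (p ^ κ)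
    (fun c => ∑ b ∈ Finset.univ.filter (fun b : ZMod (p ^ lam) => IsUnit b),
      Tt p κ lam q χ ((m : ZMod (p ^ κ))) n c b)]
  refine Finset.sum_congr rfl (fun c _ => ?_)
  rw [Finset.mul_sum]
  refine Finset.sum_nbij' (fun b => (b : ZMod (p ^ lam))) (fun b => b.val) ?_ ?_ ?_ ?_ ?_
  · intro b hb
    simp only [Finset.mem_filter, Finset.mem_range] at hb
    simp only [Finset.mem_filter, Finset.mem_univ, true_and]
    rw [ZMod.isUnit_iff_coprime]
    exact (Nat.coprime_pow_right_iff (by omega) _ _).mpr hb.2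
  · intro b hb
    simp only [Finset.mem_filter, Finset.mem_univ, true_and] at hb
    simp only [Finset.mem_filter, Finset.mem_range]
    constructor
    · exact ZMod.val_lt b
    · have : IsUnit ((b.val : ℕ) : ZMod (p ^ lam)) := by
        rwa [ZMod.natCast_val, ZMod.cast_id]
      have := (ZMod.isUnit_iff_coprime _ _).mp this
      exact (Nat.coprime_pow_right_iff (by omega : 0 < lam) _ _).mp this
  · intro b hb
    simp only [Finset.mem_filter, Finset.mem_range] at hb
    exact ZMod.val_cast_of_lt hb.1
  · intro b _; simp [ZMod.natCast_val, ZMod.cast_id]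
  · intro b hb
    simp only [Finset.mem_filter, Finset.mem_range] at hb
    rw [Tt, Xel, psi, psi]
    have hbv : ((b : ZMod (p ^ lam)).val : ZMod (p ^ κ)) = ((b : ℕ) : ZMod (p ^ κ)) := by
      rw [ZMod.val_cast_of_lt hb.1]
    rw [hbv]
    have h1 : ((p ^ κ : ℕ) : ℝ) = (p : ℝ) ^ κ := by push_cast; ring
    have h2 : ((p ^ lam : ℕ) : ℝ) = (p : ℝ) ^ lam := by push_cast; ring
    rw [h1, h2]
    ring

section Core

variable {p κ lam q : ℕ} {χ : DirichletCharacter ℂ (p ^ κ)}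

lemma beta_add (hp : p.Prime) (hkl : lam ≤ κ) (b₁ b₂ : ZMod (p ^ lam)) :
    (((b₁ + b₂).val : ℕ) : ZMod (p ^ κ)) * (p : ZMod (p ^ κ)) ^ (κ - lam)
      = ((b₁.val : ℕ) : ZMod (p ^ κ)) * (p : ZMod (p ^ κ)) ^ (κ - lam)
        + ((b₂.val : ℕ) : ZMod (p ^ κ)) * (p : ZMod (p ^ κ)) ^ (κ - lam) := by
  haveI : NeZero (p ^ lam) := ⟨pow_ne_zero _ hp.pos.ne'⟩
  by_cases hκ1 : 1 ≤ κ
  · have h0 : (p : ZMod (p ^ κ)) ^ lam * (p : ZMod (p ^ κ)) ^ (κ - lam) = 0 := by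
      rw [← pow_add]
      exact ppow_zero hκ1 (by omega)
    have hmod := Nat.mod_add_div (b₁.val + b₂.val) (p ^ lam)
    have hc := congrArg
      (fun a : ℕ => ((a : ℕ) : ZMod (p ^ κ)) * (p : ZMod (p ^ κ)) ^ (κ - lam)) hmod
    push_cast at hc
    rw [ZMod.val_add]
    push_cast
    linear_combination hc
      - (((b₁.val + b₂.val) / p ^ lam : ℕ) : ZMod (p ^ κ)) * h0
  · have hk0 : κ = 0 := by omega
    subst hk0
    have : Subsingleton (ZMod (p ^ 0)) := by
      rw [pow_zero]
      infer_instance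
    exact Subsingleton.elim _ _

lemma q_unit_zmod (hp : p.Prime) (hq : Nat.Coprime q p) (j : ℕ) :
    IsUnit (q : ZMod (p ^ j)) := by
  rw [ZMod.isUnit_iff_coprime]
  exact Nat.Coprime.pow_right _ hq

lemma Xel_unit (hp : p.Prime) (hkl : lam < κ) (hq : Nat.Coprime q p)
    {c : ZMod (p ^ κ)} (hc : IsUnit c) (b : ZMod (p ^ lam)) :
    IsUnit (Xel p κ lam q c b) := by
  rw [Xel]
  rw [add_comm]
  refine IsNilpotent.isUnit_add_left_of_commute ?_ (hc.mul (q_unit_zmod hp hq κ))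
    (Commute.all _ _)
  refine ⟨κ, ?_⟩
  rw [mul_pow, ← pow_mul]
  rw [ppow_zero (by omega) (Nat.le_mul_of_pos_left κ (by omega))]
  ring

lemma CzA (hp : p.Prime) (hlam : 1 ≤ lam) (hκ : lam < κ) (hq : Nat.Coprime q p)
    (hχ : χ.IsPrimitive) {μ : ZMod (p ^ κ)} (hμ : ¬ IsUnit μ) (n : ℤ) :
    haveI : NeZero (p ^ κ) := ⟨pow_ne_zero _ hp.pos.ne'⟩
    haveI : NeZero (p ^ lam) := ⟨pow_ne_zero _ hp.pos.ne'⟩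
    Cz p κ lam q χ μ n = 0 := by
  haveI : NeZero (p ^ κ) := ⟨pow_ne_zero _ hp.pos.ne'⟩
  haveI : NeZero (p ^ lam) := ⟨pow_ne_zero _ hp.pos.ne'⟩
  obtain ⟨v, hv⟩ := prim_exists_v hp (by omega) χ hχ
  set u : ZMod (p ^ κ) := 1 + (p : ZMod (p ^ κ)) ^ (κ - 1) * v with hu_def
  have h2κ : (p : ZMod (p ^ κ)) ^ (κ - 1) * (p : ZMod (p ^ κ)) ^ (κ - 1) = 0 := by
    rw [← pow_add]; exact ppow_zero (by omega) (by omega)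
  have hpk : (p : ZMod (p ^ κ)) ^ (κ - 1) * (p : ZMod (p ^ κ)) = 0 := by
    rw [← pow_succ]
    exact ppow_zero (by omega) (by omega)
  have hu : IsUnit u := by
    rw [hu_def]
    exact isUnit_add_sq_zero isUnit_one
      (by linear_combination (v * v) * h2κ)
  obtain ⟨μ₀, hμ₀⟩ := nonunit_eq_p_mul hp (by omega) hμ
  set A : ℂ := (starRingEnd ℂ) (χ u) with hA_def
  have key : ∀ (c : ZMod (p ^ κ)) (b : ZMod (p ^ lam)),
      Tt p κ lam q χ μ n (c * u) b = A * Tt p κ lam q χ μ n c b := by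
    intro c b
    by_cases hc : IsUnit c
    · have hXu : IsUnit (Xel p κ lam q c b) := Xel_unit hp hκ hq hc b
      have hXeq : Xel p κ lam q (c * u) b
          = Xel p κ lam q c b + c * (q : ZMod (p ^ κ)) * ((p : ZMod (p ^ κ)) ^ (κ - 1) * v) := by
        rw [Xel, Xel, hu_def]; ring
      set δ : ZMod (p ^ κ) := c * (q : ZMod (p ^ κ)) * ((p : ZMod (p ^ κ)) ^ (κ - 1) * v)
        with hδ_def
      have hδ2 : δ * δ = 0 := by
        rw [hδ_def]
        linear_combination (c * c * (q : ZMod (p ^ κ)) * (q : ZMod (p ^ κ)) * v * v) * h2κ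
      have harg : -((Xel p κ lam q (c * u) b)⁻¹ * μ * (q : ZMod (p ^ κ))⁻¹)
          = -((Xel p κ lam q c b)⁻¹ * μ * (q : ZMod (p ^ κ))⁻¹) := by
        rw [hXeq, zmod_inv_add_nilp _ _ hXu hδ2, hμ₀, hδ_def]
        linear_combination ((Xel p κ lam q c b)⁻¹ * (Xel p κ lam q c b)⁻¹ * c
          * (q : ZMod (p ^ κ)) * v * μ₀ * (q : ZMod (p ^ κ))⁻¹) * hpk
      rw [Tt, Tt, harg, map_mul, map_mul, hA_def]
      ring
    · have hcu : ¬ IsUnit (c * u) := by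
        intro h
        exact hc (IsUnit.mul_iff.mp h).1
      rw [Tt, Tt, MulChar.map_nonunit χ hc, MulChar.map_nonunit χ hcu]
      simp
  have hre : Cz p κ lam q χ μ n
      = ∑ c : ZMod (p ^ κ), ∑ b ∈ Finset.univ.filter (fun b : ZMod (p ^ lam) => IsUnit b),
          Tt p κ lam q χ μ n (c * u) b := by
    rw [Cz]
    refine (Fintype.sum_bijective (· * u) ?_ _ _ (fun c => rfl)).symm
    have := hu.unit.mulRight_bijective
    rwa [IsUnit.unit_spec] at this
  have hsum : Cz p κ lam q χ μ n = A * Cz p κ lam q χ μ n := by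
    conv_lhs => rw [hre]
    rw [Cz, Finset.mul_sum]
    refine Finset.sum_congr rfl (fun c _ => ?_)
    rw [Finset.mul_sum]
    refine Finset.sum_congr rfl (fun b _ => key c b)
  have hA1 : A ≠ 1 := by
    intro h
    apply hv
    have := congrArg (starRingEnd ℂ) h
    rwa [hA_def, RingHom.map_one, Complex.conj_conj] at this
  have : (1 - A) * Cz p κ lam q χ μ n = 0 := by
    linear_combination hsum
  rcases mul_eq_zero.mp this with h | h
  · exact absurd (by linear_combination -h : A = 1) hA1
  · exact h

end Core

section CoreB

variable {p κ lam q : ℕ} {χ : DirichletCharacter ℂ (p ^ κ)}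

lemma ppow_ne_zero (hp : p.Prime) {j : ℕ} (hj : j < κ) :
    (p : ZMod (p ^ κ)) ^ j ≠ 0 := by
  intro h
  have h2 : ((p ^ j : ℕ) : ZMod (p ^ κ)) = 0 := by push_cast; exact h
  rw [ZMod.natCast_eq_zero_iff] at h2
  rw [Nat.pow_dvd_pow_iff_le_right hp.one_lt] at h2
  omega

lemma CzB (hp : p.Prime) (hlam : 2 ≤ lam) (hκ : lam < κ) (hq : Nat.Coprime q p)
    (g : ℕ) (hg : ¬ p ∣ g) {n : ℤ} (hn : (p : ℤ) ∣ n) :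
    haveI : NeZero (p ^ κ) := ⟨pow_ne_zero _ hp.pos.ne'⟩
    haveI : NeZero (p ^ lam) := ⟨pow_ne_zero _ hp.pos.ne'⟩
    Cz p κ lam q χ ((g : ℕ) : ZMod (p ^ κ)) n = 0 := by
  haveI : NeZero (p ^ κ) := ⟨pow_ne_zero _ hp.pos.ne'⟩
  haveI : NeZero (p ^ lam) := ⟨pow_ne_zero _ hp.pos.ne'⟩
  obtain ⟨n', hn'⟩ := hn
  set ρ : ZMod (p ^ lam) := (p : ZMod (p ^ lam)) ^ (lam - 1) with hρ_def
  have hρ2 : ρ * ρ = 0 := by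
    rw [hρ_def, ← pow_add]; exact ppow_zero (by omega) (by omega)
  have hpρ : (p : ZMod (p ^ lam)) * ρ = 0 := by
    rw [hρ_def, ← pow_succ']
    exact ppow_zero (by omega) (by omega)
  have h2κ : (p : ZMod (p ^ κ)) ^ (κ - 1) * (p : ZMod (p ^ κ)) ^ (κ - 1) = 0 := by
    rw [← pow_add]; exact ppow_zero (by omega) (by omega)
  have hpk : (p : ZMod (p ^ κ)) ^ (κ - 1) * (p : ZMod (p ^ κ)) = 0 := by
    rw [← pow_succ]; exact ppow_zero (by omega) (by omega)
  have hgu : IsUnit ((g : ℕ) : ZMod (p ^ κ)) := by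
    rw [ZMod.isUnit_iff_coprime]
    exact Nat.Coprime.pow_right _ ((hp.coprime_iff_not_dvd).mpr hg).symm
  have hqu : IsUnit ((q : ℕ) : ZMod (p ^ κ)) := q_unit_zmod hp hq κ
  -- the inner vanishing
  have key : ∀ (c : ZMod (p ^ κ)) (b : ZMod (p ^ lam)), IsUnit b →
      ∑ r ∈ Finset.range p, Tt p κ lam q χ ((g : ℕ) : ZMod (p ^ κ)) n c
        (b + ρ * (r : ZMod (p ^ lam))) = 0 := by
    intro c b hb
    by_cases hc : IsUnit c
    · have hXu : IsUnit (Xel p κ lam q c b) := Xel_unit hp hκ hq hc b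
      set X : ZMod (p ^ κ) := Xel p κ lam q c b with hX_def
      set w : ZMod (p ^ κ) :=
        X⁻¹ * X⁻¹ * ((g : ℕ) : ZMod (p ^ κ)) * ((q : ℕ) : ZMod (p ^ κ))⁻¹
          * (p : ZMod (p ^ κ)) ^ (κ - 1) with hw_def
      set z : ℂ := psi (p ^ κ) w with hz_def
      have hterm : ∀ r ∈ Finset.range p,
          Tt p κ lam q χ ((g : ℕ) : ZMod (p ^ κ)) n c (b + ρ * (r : ZMod (p ^ lam)))
            = Tt p κ lam q χ ((g : ℕ) : ZMod (p ^ κ)) n c b * z ^ r := by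
        intro r hr
        have hrp : r < p := Finset.mem_range.mp hr
        set y : ZMod (p ^ lam) := ρ * (r : ZMod (p ^ lam)) with hy_def
        have hy2 : y * y = 0 := by
          rw [hy_def]
          linear_combination ((r : ZMod (p ^ lam)) * (r : ZMod (p ^ lam))) * hρ2
        -- value of the shift on the X side
        have hyval : ((y.val : ℕ) : ZMod (p ^ κ)) * (p : ZMod (p ^ κ)) ^ (κ - lam)
            = (p : ZMod (p ^ κ)) ^ (κ - 1) * (r : ZMod (p ^ κ)) := by
          have hy_nat : y = ((p ^ (lam - 1) * r : ℕ) : ZMod (p ^ lam)) := by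
            rw [hy_def, hρ_def]; push_cast; ring
          have hlt : p ^ (lam - 1) * r < p ^ lam := by
            calc p ^ (lam - 1) * r < p ^ (lam - 1) * p := by
                  have hpos : 0 < p ^ (lam - 1) := Nat.pow_pos hp.pos
                  exact (Nat.mul_lt_mul_left hpos).mpr hrp
              _ = p ^ lam := by rw [← pow_succ]; congr 1; omega
          rw [hy_nat, ZMod.val_cast_of_lt hlt]
          push_cast
          rw [show (p : ZMod (p ^ κ)) ^ (lam - 1) * (r : ZMod (p ^ κ))
              * (p : ZMod (p ^ κ)) ^ (κ - lam)
              = (p : ZMod (p ^ κ)) ^ ((lam - 1) + (κ - lam)) * (r : ZMod (p ^ κ)) by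
            rw [pow_add]; ring]
          congr 2
          omega
        have hXeq : Xel p κ lam q c (b + y)
            = X + (p : ZMod (p ^ κ)) ^ (κ - 1) * (r : ZMod (p ^ κ)) := by
          rw [Xel, beta_add hp (by omega) b y, hyval, hX_def, Xel]
          ring
        set δ : ZMod (p ^ κ) := (p : ZMod (p ^ κ)) ^ (κ - 1) * (r : ZMod (p ^ κ)) with hδ_def
        have hδ2 : δ * δ = 0 := by
          rw [hδ_def]
          linear_combination ((r : ZMod (p ^ κ)) * (r : ZMod (p ^ κ))) * h2κ
        -- psi M part
        have hargM : -((Xel p κ lam q c (b + y))⁻¹ * ((g : ℕ) : ZMod (p ^ κ))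
              * ((q : ℕ) : ZMod (p ^ κ))⁻¹)
            = -(X⁻¹ * ((g : ℕ) : ZMod (p ^ κ)) * ((q : ℕ) : ZMod (p ^ κ))⁻¹)
              + (r : ZMod (p ^ κ)) * w := by
          rw [hXeq, zmod_inv_add_nilp _ _ hXu hδ2, hw_def, hδ_def]
          ring
        -- psi L part
        have hbu2 : (b + y)⁻¹ = b⁻¹ - b⁻¹ * b⁻¹ * y := zmod_inv_add_nilp _ _ hb hy2
        have hargL : (n : ZMod (p ^ lam)) * ((q : ℕ) : ZMod (p ^ lam))⁻¹ * (b + y)⁻¹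
            = (n : ZMod (p ^ lam)) * ((q : ℕ) : ZMod (p ^ lam))⁻¹ * b⁻¹ := by
          rw [hbu2, hn', hy_def, hρ_def]
          push_cast
          linear_combination (-(n' : ZMod (p ^ lam)) * ((q : ℕ) : ZMod (p ^ lam))⁻¹
            * b⁻¹ * b⁻¹ * (r : ZMod (p ^ lam))) *
              (by rw [← pow_succ']; exact ppow_zero (by omega) (by omega) :
                (p : ZMod (p ^ lam)) * (p : ZMod (p ^ lam)) ^ (lam - 1) = 0)
        rw [Tt, Tt, hargM, hargL, psi_add, psi_natmul]
        rw [hz_def]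
        ring
      rw [Finset.sum_congr rfl hterm, ← Finset.mul_sum]
      have hzp : z ^ p = 1 := by
        rw [hz_def, ← psi_natmul]
        have : (p : ZMod (p ^ κ)) * w = 0 := by
          rw [hw_def]
          linear_combination (X⁻¹ * X⁻¹ * ((g : ℕ) : ZMod (p ^ κ))
            * ((q : ℕ) : ZMod (p ^ κ))⁻¹) * hpk
        rw [this, psi_zero]
      have hz1 : z ≠ 1 := by
        rw [hz_def]
        apply psi_ne_one
        intro hw0
        have hsu : IsUnit (X⁻¹ * X⁻¹ * ((g : ℕ) : ZMod (p ^ κ))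
            * ((q : ℕ) : ZMod (p ^ κ))⁻¹) :=
          ((((isUnit_inv_zmod hXu).mul (isUnit_inv_zmod hXu)).mul hgu).mul
            (isUnit_inv_zmod hqu))
        have : (p : ZMod (p ^ κ)) ^ (κ - 1) = 0 := by
          obtain ⟨s, hs⟩ := hsu
          have h1 : (s⁻¹ : (ZMod (p ^ κ))ˣ) * (s : ZMod (p ^ κ)) = 1 := by
            rw [← Units.val_mul]
            norm_num
          calc (p : ZMod (p ^ κ)) ^ (κ - 1)
              = ((s⁻¹ : (ZMod (p ^ κ))ˣ) * (s : ZMod (p ^ κ)))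
                * (p : ZMod (p ^ κ)) ^ (κ - 1) := by rw [h1, one_mul]
            _ = (s⁻¹ : (ZMod (p ^ κ))ˣ) * w := by rw [hw_def, ← hs]; ring
            _ = 0 := by rw [hw0, mul_zero]
        exact ppow_ne_zero hp (by omega) this
      rw [geom_sum_eq hz1, hzp, sub_self, zero_div, mul_zero]
    · refine Finset.sum_eq_zero (fun r _ => ?_)
      rw [Tt, MulChar.map_nonunit χ hc]
      simp
  -- reindex each copy of Cz
  have hCz_r : ∀ r : ℕ,
      Cz p κ lam q χ ((g : ℕ) : ZMod (p ^ κ)) n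
        = ∑ c : ZMod (p ^ κ), ∑ b ∈ Finset.univ.filter (fun b : ZMod (p ^ lam) => IsUnit b),
            Tt p κ lam q χ ((g : ℕ) : ZMod (p ^ κ)) n c (b + ρ * (r : ZMod (p ^ lam))) := by
    intro r
    rw [Cz]
    refine Finset.sum_congr rfl (fun c _ => ?_)
    set t : ZMod (p ^ lam) := ρ * (r : ZMod (p ^ lam)) with ht_def
    have ht2 : t * t = 0 := by
      rw [ht_def]
      linear_combination ((r : ZMod (p ^ lam)) * (r : ZMod (p ^ lam))) * hρ2
    refine Finset.sum_nbij' (fun b => b - t) (fun b => b + t) ?_ ?_ ?_ ?_ ?_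
    · intro a ha
      simp only [Finset.mem_filter, Finset.mem_univ, true_and] at ha ⊢
      rw [sub_eq_add_neg]
      exact isUnit_add_sq_zero ha (by linear_combination ht2)
    · intro a ha
      simp only [Finset.mem_filter, Finset.mem_univ, true_and] at ha ⊢
      exact isUnit_add_sq_zero ha ht2
    · intro a _; ring
    · intro a _; ring
    · intro a _
      congr 1
      ring
  have hps : (p : ℂ) * Cz p κ lam q χ ((g : ℕ) : ZMod (p ^ κ)) n
      = ∑ r ∈ Finset.range p, ∑ c : ZMod (p ^ κ),
          ∑ b ∈ Finset.univ.filter (fun b : ZMod (p ^ lam) => IsUnit b),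
            Tt p κ lam q χ ((g : ℕ) : ZMod (p ^ κ)) n c (b + ρ * (r : ZMod (p ^ lam))) := by
    rw [Finset.sum_congr rfl (fun r _ => (hCz_r r).symm), Finset.sum_const,
      Finset.card_range, nsmul_eq_mul]
  have hzero : ∑ r ∈ Finset.range p, ∑ c : ZMod (p ^ κ),
      ∑ b ∈ Finset.univ.filter (fun b : ZMod (p ^ lam) => IsUnit b),
        Tt p κ lam q χ ((g : ℕ) : ZMod (p ^ κ)) n c (b + ρ * (r : ZMod (p ^ lam))) = 0 := by
    rw [Finset.sum_comm]
    refine Finset.sum_eq_zero (fun c _ => ?_)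
    rw [Finset.sum_comm]
    refine Finset.sum_eq_zero (fun b hb => ?_)
    exact key c b (by simpa using hb)
  rw [hzero] at hps
  have hpne : (p : ℂ) ≠ 0 := by
    exact_mod_cast hp.pos.ne'
  exact (mul_eq_zero.mp hps).resolve_left hpne

end CoreB

section CoreC

variable {p κ lam q : ℕ} {χ : DirichletCharacter ℂ (p ^ κ)}

lemma chi_conj_mul {x : ZMod (p ^ κ)} (hx : IsUnit x) :
    (starRingEnd ℂ) (χ x) * χ x = 1 := by
  have hn : ‖χ x‖ = 1 := by
    have := DirichletCharacter.unit_norm_eq_one χ hx.unit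
    rwa [IsUnit.unit_spec] at this
  have h1 : χ x * (starRingEnd ℂ) (χ x) = (Complex.normSq (χ x) : ℂ) :=
    Complex.mul_conj (χ x)
  have h2 : Complex.normSq (χ x) = ‖χ x‖ ^ 2 := by
    rw [Complex.normSq_eq_norm_sq]
  rw [mul_comm, h1, h2, hn]
  norm_num

lemma CzC (hp : p.Prime) (hlam : 1 ≤ lam) (hκ : lam < κ) (h2l : κ ≤ 2 * lam)
    (hq : Nat.Coprime q p) (μ w : ZMod (p ^ κ)) (n : ℤ) :
    haveI : NeZero (p ^ κ) := ⟨pow_ne_zero _ hp.pos.ne'⟩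
    haveI : NeZero (p ^ lam) := ⟨pow_ne_zero _ hp.pos.ne'⟩
    Cz p κ lam q χ (μ * (1 + (p : ZMod (p ^ κ)) ^ lam * w)) n
      = (starRingEnd ℂ) (χ (1 + (p : ZMod (p ^ κ)) ^ lam * w)) * Cz p κ lam q χ μ n := by
  haveI : NeZero (p ^ κ) := ⟨pow_ne_zero _ hp.pos.ne'⟩
  haveI : NeZero (p ^ lam) := ⟨pow_ne_zero _ hp.pos.ne'⟩
  set u : ZMod (p ^ κ) := 1 + (p : ZMod (p ^ κ)) ^ lam * w with hu_def
  have hl2 : (p : ZMod (p ^ κ)) ^ lam * (p : ZMod (p ^ κ)) ^ lam = 0 := by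
    rw [← pow_add]; exact ppow_zero (by omega) (by omega)
  have hlP : (p : ZMod (p ^ κ)) ^ lam * (p : ZMod (p ^ κ)) ^ (κ - lam) = 0 := by
    rw [← pow_add]; exact ppow_zero (by omega) (by omega)
  have hu : IsUnit u := by
    rw [hu_def]
    exact isUnit_add_sq_zero isUnit_one (by linear_combination (w * w) * hl2)
  have hu1 : u⁻¹ * u = 1 := ZMod.inv_mul_of_unit u hu
  set A : ℂ := (starRingEnd ℂ) (χ u) with hA_def
  have key : ∀ (c : ZMod (p ^ κ)) (b : ZMod (p ^ lam)),
      Tt p κ lam q χ (μ * u) n (c * u) b = A * Tt p κ lam q χ μ n c b := by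
    intro c b
    by_cases hc : IsUnit c
    · have hXu : IsUnit (Xel p κ lam q c b) := Xel_unit hp hκ hq hc b
      set X : ZMod (p ^ κ) := Xel p κ lam q c b with hX_def
      have hXmul : Xel p κ lam q (c * u) b = u * X := by
        rw [hX_def, Xel, Xel, hu_def]
        linear_combination (-(w * ((b.val : ℕ) : ZMod (p ^ κ)))) * hlP
      have harg : -((Xel p κ lam q (c * u) b)⁻¹ * (μ * u) * ((q : ℕ) : ZMod (p ^ κ))⁻¹)
          = -(X⁻¹ * μ * ((q : ℕ) : ZMod (p ^ κ))⁻¹) := by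
        rw [hXmul, zmod_mul_inv_unit u X hu hXu]
        linear_combination (-(X⁻¹ * μ * ((q : ℕ) : ZMod (p ^ κ))⁻¹)) * hu1
      rw [Tt, Tt, harg, map_mul, map_mul, hA_def]
      ring
    · have hcu : ¬ IsUnit (c * u) := by
        intro h
        exact hc (IsUnit.mul_iff.mp h).1
      rw [Tt, Tt, MulChar.map_nonunit χ hc, MulChar.map_nonunit χ hcu]
      simp
  have hre : Cz p κ lam q χ (μ * u) n
      = ∑ c : ZMod (p ^ κ), ∑ b ∈ Finset.univ.filter (fun b : ZMod (p ^ lam) => IsUnit b),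
          Tt p κ lam q χ (μ * u) n (c * u) b := by
    rw [Cz]
    refine (Fintype.sum_bijective (· * u) ?_ _ _ (fun c => rfl)).symm
    have := hu.unit.mulRight_bijective
    rwa [IsUnit.unit_spec] at this
  rw [hre, Cz, Finset.mul_sum]
  refine Finset.sum_congr rfl (fun c _ => ?_)
  rw [Finset.mul_sum]
  exact Finset.sum_congr rfl (fun b _ => key c b)

end CoreC

section Gch

noncomputable def gch (N : ℕ) (m : ℤ) (D : ℕ) (x : ZMod N) : ℂ :=
  ee ((m : ℝ) * (x.val : ℝ) * (D : ℝ) / (N : ℝ))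

lemma gch_zero (N : ℕ) [NeZero N] (m : ℤ) (D : ℕ) : gch N m D 0 = 1 := by
  simp [gch, ee_zero]

lemma gch_add (N : ℕ) [NeZero N] (m : ℤ) (D : ℕ) (x y : ZMod N) :
    gch N m D (x + y) = gch N m D x * gch N m D y := by
  have hN : (N : ℝ) ≠ 0 := Nat.cast_ne_zero.mpr (NeZero.ne N)
  rw [gch, gch, gch, ← ee_add]
  set k : ℕ := (x.val + y.val) / N with hk
  have hNat : x.val + y.val = (x + y).val + N * k := by
    rw [ZMod.val_add, hk]
    exact (Nat.mod_add_div _ _).symm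
  have hR : (x.val : ℝ) + (y.val : ℝ) = ((x + y).val : ℝ) + (k : ℝ) * N := by
    rw [mul_comm]
    exact_mod_cast congrArg (Nat.cast : ℕ → ℝ) hNat
  have key : (m : ℝ) * (x.val : ℝ) * D / N + (m : ℝ) * (y.val : ℝ) * D / N
      = (m : ℝ) * ((x + y).val : ℝ) * D / N + ((m * (k : ℤ) * (D : ℤ) : ℤ) : ℝ) := by
    have hint : ((m * (k : ℤ) * (D : ℤ) : ℤ) : ℝ) = (m : ℝ) * (k : ℝ) * (D : ℝ) := by
      push_cast; ring
    have hsum : (m : ℝ) * (x.val : ℝ) * D + (m : ℝ) * (y.val : ℝ) * D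
        = (m : ℝ) * ((x + y).val : ℝ) * D + ((m : ℝ) * (k : ℝ) * (D : ℝ)) * N := by
      linear_combination ((m : ℝ) * (D : ℝ)) * hR
    rw [hint, ← add_div, hsum, add_div, mul_div_cancel_right₀ _ hN]
  rw [key, ee_add_int]

lemma gch_natmul (N : ℕ) [NeZero N] (m : ℤ) (D : ℕ) (r : ℕ) (x : ZMod N) :
    gch N m D ((r : ZMod N) * x) = gch N m D x ^ r := by
  induction r with
  | zero => simp [gch_zero]
  | succ j ih =>
      push_cast
      rw [add_mul, one_mul, gch_add, ih, pow_succ]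

end Gch

section Main

variable {p κ lam q : ℕ} {χ : DirichletCharacter ℂ (p ^ κ)}

lemma not_unit_of_dvd (hp : p.Prime) (hκ1 : 1 ≤ κ) {g : ℕ} (hg : p ∣ g) :
    ¬ IsUnit ((g : ℕ) : ZMod (p ^ κ)) := by
  intro h
  rw [ZMod.isUnit_iff_coprime] at h
  have h2 : Nat.Coprime g p := Nat.Coprime.coprime_dvd_right (dvd_pow_self p
    (by omega : κ ≠ 0)) h
  have h3 : p ∣ Nat.gcd g p := Nat.dvd_gcd hg dvd_rfl
  rw [Nat.Coprime] at h2
  rw [h2] at h3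
  have := Nat.le_of_dvd one_pos h3
  have := hp.two_le
  omega

lemma Cstar_zero (hp : p.Prime) (hlam : 2 ≤ lam) (hκ : lam < κ) (hq : Nat.Coprime q p)
    (hχ : χ.IsPrimitive) {n : ℤ} (hn : (p : ℤ) ∣ n) (γ : ℕ) :
    Cstar p κ lam q χ (γ : ℤ) n = 0 := by
  haveI : NeZero (p ^ κ) := ⟨pow_ne_zero _ hp.pos.ne'⟩
  haveI : NeZero (p ^ lam) := ⟨pow_ne_zero _ hp.pos.ne'⟩
  rw [Cstar_eq p κ lam q hp (by omega) χ (γ : ℤ) n]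
  have hcast : (((γ : ℤ)) : ZMod (p ^ κ)) = ((γ : ℕ) : ZMod (p ^ κ)) := by
    push_cast; rfl
  rw [hcast]
  by_cases hdγ : p ∣ γ
  · exact CzA hp (by omega) hκ hq hχ (not_unit_of_dvd hp (by omega) hdγ) n
  · exact CzB hp hlam hκ hq γ hdγ hn

end Main

section Main2

variable {p κ lam q : ℕ} {χ : DirichletCharacter ℂ (p ^ κ)}

lemma CC2 (hp : p.Prime) (hlam : 2 ≤ lam) (hκ : lam < κ) (h1 : 2 * κ + 1 ≤ 3 * lam)
    (hq : Nat.Coprime q p) {d : ℕ} (hd : 0 < d) (hdp : Nat.Coprime d p)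
    (hχ : χ.IsPrimitive) (m n₁ n₂ : ℤ) (hm : ¬ (p : ℤ) ^ (κ - lam) ∣ m) :
    CC p κ lam q d χ m n₁ n₂ = 0 := by
  haveI : NeZero (p ^ κ) := ⟨pow_ne_zero _ hp.pos.ne'⟩
  haveI : NeZero (p ^ lam) := ⟨pow_ne_zero _ hp.pos.ne'⟩
  set D : ℕ := ((d : ZMod (p ^ κ))⁻¹).val with hD_def
  set P : ℕ := (((p : ZMod d) ^ (κ + lam))⁻¹).val with hP_def
  set K : ℂ := ee ((m : ℝ) * ((n₁ : ℝ) * (p : ℝ) ^ (3 * κ - lam) * (P : ℝ))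
      / ((d : ℝ) * (p : ℝ) ^ κ)) with hK_def
  set F : ZMod (p ^ κ) → ℂ := fun x => Cz p κ lam q χ x n₁
      * (starRingEnd ℂ) (Cz p κ lam q χ x n₂) * gch (p ^ κ) m D x with hF_def
  have hd0 : (d : ℝ) ≠ 0 := Nat.cast_ne_zero.mpr hd.ne'
  have hp0 : (p : ℝ) ^ κ ≠ 0 := pow_ne_zero _ (Nat.cast_ne_zero.mpr hp.pos.ne')
  have hcNR : ((p ^ κ : ℕ) : ℝ) = (p : ℝ) ^ κ := by push_cast; ring
  -- Step 1 : CC = K * ∑ F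
  have step1 : CC p κ lam q d χ m n₁ n₂ = K * ∑ x : ZMod (p ^ κ), F x := by
    rw [CC]
    have hstep : ∀ γ ∈ Finset.range (p ^ κ),
        Cstar p κ lam q χ (γ : ℤ) n₁ * (starRingEnd ℂ) (Cstar p κ lam q χ (γ : ℤ) n₂) *
          ee ((m : ℝ) * ((n₁ : ℝ) * (p : ℝ) ^ (3 * κ - lam) * (P : ℝ)
                + (γ : ℝ) * (d : ℝ) * (D : ℝ))
              / ((d : ℝ) * (p : ℝ) ^ κ))
          = K * F ((γ : ℕ) : ZMod (p ^ κ)) := by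
      intro γ hγ
      have hγlt := Finset.mem_range.mp hγ
      have hCs1 : Cstar p κ lam q χ (γ : ℤ) n₁ = Cz p κ lam q χ ((γ : ℕ) : ZMod (p ^ κ)) n₁ := by
        rw [Cstar_eq p κ lam q hp (by omega) χ (γ : ℤ) n₁]
        congr 1
        push_cast
        rfl
      have hCs2 : Cstar p κ lam q χ (γ : ℤ) n₂ = Cz p κ lam q χ ((γ : ℕ) : ZMod (p ^ κ)) n₂ := by
        rw [Cstar_eq p κ lam q hp (by omega) χ (γ : ℤ) n₂]
        congr 1
        push_cast
        rfl
      have hval : (((γ : ℕ) : ZMod (p ^ κ))).val = γ := ZMod.val_cast_of_lt hγlt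
      have harg : (m : ℝ) * ((n₁ : ℝ) * (p : ℝ) ^ (3 * κ - lam) * (P : ℝ)
              + (γ : ℝ) * (d : ℝ) * (D : ℝ)) / ((d : ℝ) * (p : ℝ) ^ κ)
          = (m : ℝ) * ((n₁ : ℝ) * (p : ℝ) ^ (3 * κ - lam) * (P : ℝ)) / ((d : ℝ) * (p : ℝ) ^ κ)
            + (m : ℝ) * (γ : ℝ) * (D : ℝ) / ((p ^ κ : ℕ) : ℝ) := by
        rw [hcNR]
        field_simp
      rw [hCs1, hCs2, harg, ee_add, ← hK_def]
      have hgch : gch (p ^ κ) m D ((γ : ℕ) : ZMod (p ^ κ))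
          = ee ((m : ℝ) * (γ : ℝ) * (D : ℝ) / ((p ^ κ : ℕ) : ℝ)) := by
        rw [gch, hval]
      rw [hF_def]
      simp only
      rw [hgch]
      ring
    rw [Finset.sum_congr rfl hstep, ← Finset.mul_sum,
      sum_range_eq_sum_zmod (p ^ κ) F]
  -- Step 2 : ∑ F = 0
  have hl2 : (p : ZMod (p ^ κ)) ^ lam * (p : ZMod (p ^ κ)) ^ lam = 0 := by
    rw [← pow_add]; exact ppow_zero (by omega) (by omega)
  have step2 : ∑ x : ZMod (p ^ κ), F x = 0 := by
    have hu : ∀ w : ℕ, IsUnit (1 + (p : ZMod (p ^ κ)) ^ lam * (w : ZMod (p ^ κ))) := by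
      intro w
      exact isUnit_add_sq_zero isUnit_one
        (by linear_combination ((w : ZMod (p ^ κ)) * (w : ZMod (p ^ κ))) * hl2)
    have havg : ((p ^ (κ - lam) : ℕ) : ℂ) * (∑ x : ZMod (p ^ κ), F x)
        = ∑ w ∈ Finset.range (p ^ (κ - lam)), ∑ x : ZMod (p ^ κ),
            F (x * (1 + (p : ZMod (p ^ κ)) ^ lam * (w : ZMod (p ^ κ)))) := by
      rw [eq_comm]
      have hre : ∀ w ∈ Finset.range (p ^ (κ - lam)),
          (∑ x : ZMod (p ^ κ),
            F (x * (1 + (p : ZMod (p ^ κ)) ^ lam * (w : ZMod (p ^ κ)))))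
          = ∑ x : ZMod (p ^ κ), F x := by
        intro w _
        refine Fintype.sum_bijective
          (· * (1 + (p : ZMod (p ^ κ)) ^ lam * (w : ZMod (p ^ κ)))) ?_ _ _ (fun x => rfl)
        have := (hu w).unit.mulRight_bijective
        rwa [IsUnit.unit_spec] at this
      rw [Finset.sum_congr rfl hre, Finset.sum_const, Finset.card_range, nsmul_eq_mul]
    have hzero : ∑ w ∈ Finset.range (p ^ (κ - lam)), ∑ x : ZMod (p ^ κ),
        F (x * (1 + (p : ZMod (p ^ κ)) ^ lam * (w : ZMod (p ^ κ)))) = 0 := by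
      rw [Finset.sum_comm]
      refine Finset.sum_eq_zero (fun x _ => ?_)
      have hFxu : ∀ w : ℕ,
          F (x * (1 + (p : ZMod (p ^ κ)) ^ lam * (w : ZMod (p ^ κ))))
            = F x * (gch (p ^ κ) m D (x * (p : ZMod (p ^ κ)) ^ lam)) ^ w := by
        intro w
        have hCz1 := CzC (χ := χ) hp (by omega) hκ (by omega) hq x ((w : ZMod (p ^ κ))) n₁
        have hCz2 := CzC (χ := χ) hp (by omega) hκ (by omega) hq x ((w : ZMod (p ^ κ))) n₂
        have hchi : (starRingEnd ℂ) (χ (1 + (p : ZMod (p ^ κ)) ^ lam * (w : ZMod (p ^ κ))))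
            * χ (1 + (p : ZMod (p ^ κ)) ^ lam * (w : ZMod (p ^ κ))) = 1 :=
          chi_conj_mul (hu w)
        have hsplit : x * (1 + (p : ZMod (p ^ κ)) ^ lam * (w : ZMod (p ^ κ)))
            = x + (w : ZMod (p ^ κ)) * (x * (p : ZMod (p ^ κ)) ^ lam) := by ring
        have hgch : gch (p ^ κ) m D (x * (1 + (p : ZMod (p ^ κ)) ^ lam * (w : ZMod (p ^ κ))))
            = gch (p ^ κ) m D x * (gch (p ^ κ) m D (x * (p : ZMod (p ^ κ)) ^ lam)) ^ w := by
          rw [hsplit, gch_add, gch_natmul]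
        rw [hF_def]
        simp only
        rw [hCz1, hCz2, map_mul, hgch, Complex.conj_conj]
        linear_combination (Cz p κ lam q χ x n₁ * (starRingEnd ℂ) (Cz p κ lam q χ x n₂)
          * gch (p ^ κ) m D x
          * (gch (p ^ κ) m D (x * (p : ZMod (p ^ κ)) ^ lam)) ^ w) * hchi
      rw [Finset.sum_congr rfl (fun w _ => hFxu w), ← Finset.mul_sum]
      by_cases hxu : IsUnit x
      · set z : ℂ := gch (p ^ κ) m D (x * (p : ZMod (p ^ κ)) ^ lam) with hz_def
        have hzc : z ^ (p ^ (κ - lam)) = 1 := by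
          rw [hz_def, ← gch_natmul]
          have h0 : (p : ZMod (p ^ κ)) ^ (κ - lam) * (p : ZMod (p ^ κ)) ^ lam = 0 := by
            rw [← pow_add]; exact ppow_zero (by omega) (by omega)
          have : ((p ^ (κ - lam) : ℕ) : ZMod (p ^ κ)) * (x * (p : ZMod (p ^ κ)) ^ lam) = 0 := by
            push_cast
            linear_combination x * h0
          rw [this, gch_zero]
        have hz1 : z ≠ 1 := by
          intro hone
          rw [hz_def, gch, ee_eq_one_iff] at hone
          obtain ⟨j, hj⟩ := hone
          set V : ℕ := (x * (p : ZMod (p ^ κ)) ^ lam).val with hV_def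
          have hZ : m * (V : ℤ) * (D : ℤ) = j * ((p ^ κ : ℕ) : ℤ) := by
            have hNR : ((p ^ κ : ℕ) : ℝ) ≠ 0 := by rw [hcNR]; exact hp0
            field_simp at hj
            rw [mul_comm (j : ℤ)]
            exact_mod_cast hj
          have hdvd : (p : ℤ) ^ κ ∣ m * (V : ℤ) * (D : ℤ) := by
            refine ⟨j, ?_⟩
            rw [hZ]
            push_cast
            ring
          have hxv : ¬ p ∣ x.val := unit_not_dvd_val hp (by omega) hxu
          have hVeq : V = (x.val % p ^ (κ - lam)) * p ^ lam := by
            rw [hV_def]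
            have hxx : ((x.val : ℕ) : ZMod (p ^ κ)) = x := by
              rw [ZMod.natCast_val, ZMod.cast_id]
            have hx2 : x * (p : ZMod (p ^ κ)) ^ lam
                = ((x.val * p ^ lam : ℕ) : ZMod (p ^ κ)) := by
              push_cast
              rw [hxx]
            rw [hx2, ZMod.val_natCast]
            have hsp : p ^ κ = p ^ (κ - lam) * p ^ lam := by
              rw [← pow_add]; congr 1; omega
            generalize x.val = xv
            rw [hsp]
            exact Nat.mul_mod_mul_right _ _ _
          set a : ℕ := x.val % p ^ (κ - lam) with ha_def
          have hpa : ¬ p ∣ a := by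
            intro hpa
            apply hxv
            have h3 : p ∣ p ^ (κ - lam) := dvd_pow_self p (by omega : κ - lam ≠ 0)
            have h4 := Nat.div_add_mod x.val (p ^ (κ - lam))
            calc p ∣ p ^ (κ - lam) * (x.val / p ^ (κ - lam)) + a :=
                  dvd_add (Dvd.dvd.mul_right h3 _) hpa
              _ = x.val := by rw [ha_def]; exact h4
          have hpD : ¬ p ∣ D := by
            have hdu : IsUnit ((d : ℕ) : ZMod (p ^ κ)) := by
              rw [ZMod.isUnit_iff_coprime]
              exact hdp.pow_right _
            exact unit_not_dvd_val hp (by omega) (isUnit_inv_zmod hdu)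
          have hsplit2 : m * (V : ℤ) * (D : ℤ) = (m * (a : ℤ) * (D : ℤ)) * (p : ℤ) ^ lam := by
            rw [hVeq]; push_cast; ring
          have hps : (p : ℤ) ^ κ = (p : ℤ) ^ (κ - lam) * (p : ℤ) ^ lam := by
            rw [← pow_add]; congr 1; omega
          have hdvd2 : (p : ℤ) ^ (κ - lam) ∣ m * (a : ℤ) * (D : ℤ) := by
            rw [hsplit2, hps] at hdvd
            exact (mul_dvd_mul_iff_right
              (pow_ne_zero lam (by exact_mod_cast hp.pos.ne' : (p : ℤ) ≠ 0))).mp hdvd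
          have hcopN : Nat.Coprime (p ^ (κ - lam)) (a * D) :=
            Nat.Coprime.pow_left _ (Nat.Coprime.mul_right
              ((hp.coprime_iff_not_dvd).mpr hpa) ((hp.coprime_iff_not_dvd).mpr hpD))
          have hcop : IsCoprime ((p : ℤ) ^ (κ - lam)) ((a * D : ℕ) : ℤ) := by
            rw [Int.isCoprime_iff_gcd_eq_one]
            have h5 : ((p : ℤ) ^ (κ - lam)) = ((p ^ (κ - lam) : ℕ) : ℤ) := by push_cast; ring
            rw [h5, Int.gcd_natCast_natCast]
            exact hcopN
          apply hm
          refine hcop.dvd_of_dvd_mul_right ?_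
          have h6 : m * ((a * D : ℕ) : ℤ) = m * (a : ℤ) * (D : ℤ) := by push_cast; ring
          rw [h6]
          exact hdvd2
        rw [geom_sum_eq hz1, hzc, sub_self, zero_div, mul_zero]
      · have hCz0 : Cz p κ lam q χ x n₁ = 0 := CzA hp (by omega) hκ hq hχ hxu n₁
        rw [hF_def]
        simp only
        rw [hCz0, zero_mul, zero_mul, zero_mul]
    rw [hzero] at havg
    have hcne : ((p ^ (κ - lam) : ℕ) : ℂ) ≠ 0 := by
      exact_mod_cast (pow_ne_zero _ hp.pos.ne' : p ^ (κ - lam) ≠ 0)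
    exact (mul_eq_zero.mp havg).resolve_left hcne
  rw [step1, step2, mul_zero]

end Main2


/-- Lemma 6.1 of the paper (Sun), vanishing part: for `(2κ+1)/3 ≤ λ ≤ 3κ/4` the
character sum `C(m,n₁,n₂)` vanishes unless `gcd(n₁n₂,p) = 1` and `p^{κ−λ} ∣ m`. -/
theorem statement_14 (p κ lam q d : ℕ) (hp : p.Prime) (hodd : Odd p)
    (hlam : 2 ≤ lam) (hκ : lam < κ)
    (χ : DirichletCharacter ℂ (p ^ κ)) (hχ : χ.IsPrimitive)
    (hq : 0 < q) (hqp : Nat.gcd q p = 1) (hd : 0 < d) (hdq : d ∣ q)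
    (h1 : 2 * κ + 1 ≤ 3 * lam) (h2 : 4 * lam ≤ 3 * κ) :
    ∀ m n₁ n₂ : ℤ,
      ¬ (Int.gcd (n₁ * n₂) (p : ℤ) = 1 ∧ (p : ℤ) ^ (κ - lam) ∣ m) →
      CC p κ lam q d χ m n₁ n₂ = 0 := by
  intro m n₁ n₂ hcon
  have hqc : Nat.Coprime q p := hqp
  have hdp : Nat.Coprime d p := Nat.Coprime.coprime_dvd_left hdq hqc
  by_cases hdvd : (p : ℤ) ^ (κ - lam) ∣ m
  · have hg : Int.gcd (n₁ * n₂) (p : ℤ) ≠ 1 := fun h => hcon ⟨h, hdvd⟩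
    have h2' : Int.gcd (n₁ * n₂) (p : ℤ) ∣ p := by
      have := Int.gcd_dvd_right (a := n₁ * n₂) (b := (p : ℤ))
      exact_mod_cast this
    have hpd : (p : ℤ) ∣ n₁ * n₂ := by
      rcases (Nat.Prime.eq_one_or_self_of_dvd hp _ h2') with h | h
      · exact absurd h hg
      · have h3 := Int.gcd_dvd_left (a := n₁ * n₂) (b := (p : ℤ))
        rw [h] at h3
        exact h3
    have hp' : Prime (p : ℤ) := by
      rw [Int.prime_iff_natAbs_prime]
      simpa using hp
    rcases hp'.2.2 n₁ n₂ hpd with h | h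
    · rw [CC]
      refine Finset.sum_eq_zero (fun γ _ => ?_)
      rw [Cstar_zero hp hlam hκ hqc hχ h γ]
      ring
    · rw [CC]
      refine Finset.sum_eq_zero (fun γ _ => ?_)
      rw [Cstar_zero hp hlam hκ hqc hχ h γ, map_zero]
      ring
  · exact CC2 hp hlam hκ h1 hqc hd hdp hχ m n₁ n₂ hdvd
end
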